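/- arXiv:2203.02537 — 8 statements merged into one kernel-verified Lean document; each statement's English description precedes it below -/
import Mathlib

section
/- Let G be a finite group, H a subgroup, and L a normal subgroup of H with L < H. If H ∩ H^g ≤ L for all g ∈ G \ H (i.e., (G,H,L) is a Frobenius-Wielandt triple), and N_G(L) > H, then H/L is a Frobenius complement in N_G(L)/L; in particular N_G(L)/L is a Frobenius group. -/
open Subgroup

/-- `C` is a Frobenius complement in the ambient group: `1 < C < G` and
`C ∩ C^x = 1` for all `x ∉ C`. -/
def IsFrobeniusComplementIn {X : Type*} [Group X] (C : Subgroup X) : Prop :=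
  ⊥ < C ∧ C < ⊤ ∧ ∀ x : X, x ∉ C → C ⊓ C.map (MulAut.conj x).toMonoidHom = ⊥

/-- `X` is a Frobenius group. -/
def IsFrobeniusGroup (X : Type*) [Group X] : Prop :=
  ∃ C : Subgroup X, IsFrobeniusComplementIn C

/-- `K` is the Frobenius kernel of the ambient group: `K` is a proper nontrivial
normal subgroup admitting a Frobenius complement `C` with `X = K ⋊ C`. -/
def IsFrobeniusKernelIn {X : Type*} [Group X] (K : Subgroup X) : Prop :=
  K.Normal ∧ ⊥ < K ∧ K < ⊤ ∧ ∃ C : Subgroup X,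
    (∀ x : X, x ∉ C → C ⊓ C.map (MulAut.conj x).toMonoidHom = ⊥) ∧
    K ⊔ C = ⊤ ∧ K ⊓ C = ⊥

/-- `(X, H, L)` is a Frobenius–Wielandt triple: `L ⊴ H`, `L < H < X`, and
`H ∩ H^g ≤ L` for all `g ∉ H`. -/
def IsFWTriple {X : Type*} [Group X] (H L : Subgroup X) : Prop :=
  L ≤ H ∧ (L.subgroupOf H).Normal ∧ L < H ∧ H < ⊤ ∧
    ∀ g : X, g ∉ H → H ⊓ H.map (MulAut.conj g).toMonoidHom ≤ L

/-- `X` is a 2-Frobenius group: there are normal subgroups `K < L < X` with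
`X/K` a Frobenius group with kernel `L/K` and `L` a Frobenius group with kernel `K`. -/
def Is2FrobeniusGroup (X : Type*) [Group X] : Prop :=
  ∃ (K L : Subgroup X) (hK : K.Normal), L.Normal ∧ ⊥ < K ∧ K < L ∧ L < ⊤ ∧
    (@IsFrobeniusKernelIn _ (@QuotientGroup.Quotient.group X _ K hK)
      (L.map (@QuotientGroup.mk' X _ K hK))) ∧
    IsFrobeniusKernelIn (K.subgroupOf L)

theorem stmt_0 {G : Type*} [Group G] [Fintype G] (H L : Subgroup G)
    (hFW : IsFWTriple H L) (hnt : ⊥ < H) (hN : H < (Subgroup.normalizer (L : Set G))) :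
    IsFrobeniusComplementIn
      ((H.subgroupOf (Subgroup.normalizer (L : Set G))).map
        (QuotientGroup.mk' (L.subgroupOf (Subgroup.normalizer (L : Set G))))) ∧
    IsFrobeniusGroup (↥(Subgroup.normalizer (L : Set G)) ⧸ L.subgroupOf (Subgroup.normalizer (L : Set G))) := by
  obtain ⟨hLleH, hLnorm, hLH, hHtop, hFWc⟩ := hFW
  have hHN : H ≤ Subgroup.normalizer (L : Set G) := Subgroup.le_normalizer_of_normal_subgroupOf (hK := hLnorm) hLleH
  set N := Subgroup.normalizer (L : Set G) with hNdef
  set L' : Subgroup N := L.subgroupOf N with hL'def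
  set π : N →* N ⧸ L' := QuotientGroup.mk' L' with hπdef
  set C : Subgroup (N ⧸ L') := (H.subgroupOf N).map π with hCdef
  -- membership in C
  have hmemC : ∀ q : N ⧸ L', q ∈ C ↔ ∃ n : N, (n : G) ∈ H ∧ π n = q := by
    intro q
    constructor
    · rintro ⟨n, hn, rfl⟩; exact ⟨n, hn, rfl⟩
    · rintro ⟨n, hn, rfl⟩; exact ⟨n, hn, rfl⟩
  have hker : ∀ n : N, π n = 1 ↔ (n : G) ∈ L := by
    intro n
    rw [← MonoidHom.mem_ker, QuotientGroup.ker_mk']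
    rfl
  have h1 : ⊥ < C := by
    obtain ⟨h, hhH, hhL⟩ := SetLike.exists_of_lt hLH
    rw [bot_lt_iff_ne_bot]
    intro hbot
    have : π ⟨h, hHN hhH⟩ ∈ C := (hmemC _).2 ⟨⟨h, hHN hhH⟩, hhH, rfl⟩
    rw [hbot, Subgroup.mem_bot] at this
    exact hhL ((hker _).1 this)
  have h2 : C < ⊤ := by
    obtain ⟨n, hnN, hnH⟩ := SetLike.exists_of_lt hN
    rw [lt_top_iff_ne_top]
    intro htop
    have : π ⟨n, hnN⟩ ∈ C := htop ▸ Subgroup.mem_top _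
    obtain ⟨m, hmH, hm⟩ := (hmemC _).1 this
    rw [QuotientGroup.mk'_eq_mk'] at hm
    obtain ⟨z, hz, hmz⟩ := hm
    have hzL : ((z : N) : G) ∈ L := hz
    have : (m : G) * z = n := congrArg (Subtype.val) hmz
    exact hnH (this ▸ H.mul_mem hmH (hLleH hzL))
  have h3 : ∀ x : N ⧸ L', x ∉ C → C ⊓ C.map (MulAut.conj x).toMonoidHom = ⊥ := by
    intro x hx
    obtain ⟨n, rfl⟩ := QuotientGroup.mk'_surjective L' x
    have hnH : (n : G) ∉ H := fun hn => hx ((hmemC _).2 ⟨n, hn, rfl⟩)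
    rw [eq_bot_iff]
    rintro q ⟨hq1, hq2⟩
    obtain ⟨h, hhH, rfl⟩ := (hmemC _).1 hq1
    obtain ⟨p, hpC, hp⟩ := Subgroup.mem_map.1 hq2
    obtain ⟨h', hh'H, rfl⟩ := (hmemC _).1 hpC
    -- π h = π n * π h' * (π n)⁻¹ = π (n h' n⁻¹)
    have key : π h = π (n * h' * n⁻¹) := by
      rw [← hp]
      simp [map_mul, map_inv]
      rfl
    rw [QuotientGroup.mk'_eq_mk'] at key
    obtain ⟨z, hz, hhz⟩ := key
    have hzL : ((z : N) : G) ∈ L := hz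
    -- h = n * h' * n⁻¹ * z ; rewrite z = n * m * n⁻¹ with m ∈ L
    have hn_norm : (n : G) ∈ Subgroup.normalizer (L : Set G) := n.2
    have hmL : (n : G)⁻¹ * (z : G)⁻¹ * (n : G) ∈ L := by
      have := (Subgroup.mem_normalizer_iff.1 hn_norm ((n:G)⁻¹ * (z:G)⁻¹ * (n:G))).2
      apply this
      simpa [mul_assoc] using L.inv_mem hzL
    have e : (h : G) * z = (n : G) * h' * (n : G)⁻¹ := by
      have := congrArg (Subtype.val) hhz
      push_cast at this
      exact this
    have hcoe : (h : G) = (n : G) * (h' * ((n:G)⁻¹ * (z:G)⁻¹ * (n:G))) * (n : G)⁻¹ := by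
      have e2 : (h : G) = ((n : G) * h' * (n : G)⁻¹) * (z : G)⁻¹ := by
        rw [← e]; group
      rw [e2]; group
    have hhHn : (h : G) ∈ H.map (MulAut.conj (n : G)).toMonoidHom := by
      rw [hcoe]
      exact ⟨h' * ((n:G)⁻¹ * (z:G)⁻¹ * (n:G)), H.mul_mem hh'H (hLleH hmL), rfl⟩
    have : (h : G) ∈ L := hFWc (n : G) hnH ⟨hhH, hhHn⟩
    simpa [Subgroup.mem_bot] using (hker h).2 this
  exact ⟨⟨h1, h2, h3⟩, C, h1, h2, h3⟩
end

section
/- Let N be a normal subgroup of a finite group G and H a subgroup with G = HN and H ∩ H^x ≤ H ∩ N for all x ∈ G \ H. Then every element of G \ N is conjugate to an element of H \ N, and moreover G \ N equals the union over x ∈ G of (H \ (H ∩ N))^x. -/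
open Subgroup

/-!
Conjugating `H \ N` by a transversal of `H` gives a map `(G ⧸ H) × (H \ N) → G \ N`. It is
injective: if `x a x⁻¹ = y b y⁻¹` with `a, b ∈ H \ N`, then `b` lies in `H ∩ H^(y⁻¹x)`, which
is contained in `N` unless `y⁻¹x ∈ H`. Since `G = HN` gives `|H : H ∩ N| = |G : N|`, both sides
have `|G| - |N|` elements, so the map is onto.
-/

namespace Subgroup

variable {G : Type*} [Group G] {H N : Subgroup G}

theorem card_inf_mul_index_of_sup_eq_top [Finite G] [N.Normal] (hHN : H ⊔ N = ⊤) :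
    Nat.card (H ⊓ N : Subgroup G) * H.index = Nat.card N := by
  have hrel : N.relIndex H = N.index := by
    rw [← relIndex_sup_right, hHN, relIndex_top_right]
  have hinf : (H ⊓ N).index = H.index * N.index := by
    rw [← relIndex_mul_index inf_le_left, inf_relIndex_left, hrel, mul_comm]
  refine Nat.eq_of_mul_eq_mul_right (Nat.pos_of_ne_zero N.index_ne_zero_of_finite) ?_
  rw [card_mul_index, mul_assoc, ← hinf, card_mul_index]

theorem conj_notMem_of_notMem [N.Normal] (x : G) {a : G} (ha : a ∉ N) : x * a * x⁻¹ ∉ N := by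
  intro hxa
  exact ha (by simpa [mul_assoc] using ‹N.Normal›.conj_mem _ hxa x⁻¹)

theorem mem_of_conj_mem_of_notMem
    (hFW : ∀ x : G, x ∉ H → H ⊓ H.map (MulAut.conj x).toMonoidHom ≤ H ⊓ N)
    {g a : G} (ha : a ∈ H) (hga : g * a * g⁻¹ ∈ H) (hgaN : g * a * g⁻¹ ∉ N) : g ∈ H := by
  by_contra hg
  exact hgaN (hFW g hg ⟨hga, a, ha, rfl⟩).2

theorem conj_out_injective
    (hFW : ∀ x : G, x ∉ H → H ⊓ H.map (MulAut.conj x).toMonoidHom ≤ H ⊓ N) :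
    Function.Injective
      fun p : (G ⧸ H) × ((H : Set G) \ N : Set G) => p.1.out * p.2 * p.1.out⁻¹ := by
  rintro ⟨q, a, haH, haN⟩ ⟨q', b, hbH, hbN⟩ heq
  dsimp only at heq
  have hconj : (q'.out⁻¹ * q.out) * a * (q'.out⁻¹ * q.out)⁻¹ = b := calc
    _ = q'.out⁻¹ * (q.out * a * q.out⁻¹) * q'.out := by group
    _ = q'.out⁻¹ * (q'.out * b * q'.out⁻¹) * q'.out := by rw [heq]
    _ = b := by group
  have hmem : q'.out⁻¹ * q.out ∈ H :=
    mem_of_conj_mem_of_notMem hFW haH (hconj ▸ hbH) (hconj ▸ hbN)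
  obtain rfl : q' = q := by
    rw [← QuotientGroup.out_eq' q, ← QuotientGroup.out_eq' q']
    exact QuotientGroup.eq.mpr hmem
  obtain rfl : a = b := mul_left_cancel (mul_right_cancel heq)
  rfl

theorem card_compl_eq_index_mul_card_sdiff [Finite G] [N.Normal] (hHN : H ⊔ N = ⊤) :
    Nat.card ((N : Set G)ᶜ : Set G) = H.index * Nat.card ((H : Set G) \ N : Set G) := by
  have hG := Set.ncard_add_ncard_compl (N : Set G)
  have hH := Set.ncard_inter_add_ncard_sdiff_eq_ncard (H : Set G) N
  rw [← coe_inf] at hH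
  simp only [← Nat.card_coe_set_eq, SetLike.coe_sort_coe] at hG hH
  have hHG := card_mul_index H
  have hHNG := card_inf_mul_index_of_sup_eq_top hHN
  rw [← hH, add_mul] at hHG
  linarith

theorem exists_conj_eq_of_notMem [Finite G] [N.Normal] (hHN : H ⊔ N = ⊤)
    (hFW : ∀ x : G, x ∉ H → H ⊓ H.map (MulAut.conj x).toMonoidHom ≤ H ⊓ N)
    {g : G} (hg : g ∉ N) : ∃ x : G, ∃ h ∈ H, h ∉ N ∧ x * h * x⁻¹ = g := by
  let f := Set.codRestrict
    (fun p : (G ⧸ H) × ((H : Set G) \ N : Set G) => p.1.out * p.2 * p.1.out⁻¹)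
    ((N : Set G)ᶜ) fun p => conj_notMem_of_notMem _ p.2.2.2
  have hf : f.Injective := (Set.injective_codRestrict _).2 (conj_out_injective hFW)
  have hcard :
      Nat.card ((N : Set G)ᶜ : Set G) ≤ Nat.card ((G ⧸ H) × ((H : Set G) \ N : Set G)) := by
    rw [card_compl_eq_index_mul_card_sdiff hHN, Nat.card_prod, index]
  obtain ⟨⟨q, a, haH, haN⟩, hqa⟩ := (hf.bijective_of_nat_card_le hcard).2 ⟨g, hg⟩
  exact ⟨q.out, a, haH, haN, congrArg Subtype.val hqa⟩

end Subgroup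

theorem stmt_3 {G : Type*} [Group G] [Fintype G] (N H : Subgroup G) [N.Normal]
    (hHN : H ⊔ N = ⊤)
    (hFW : ∀ x : G, x ∉ H → H ⊓ H.map (MulAut.conj x).toMonoidHom ≤ H ⊓ N) :
    (∀ g : G, g ∉ N → ∃ x : G, ∃ h ∈ H, h ∉ N ∧ x * h * x⁻¹ = g) ∧
    {g : G | g ∉ N} =
      ⋃ x : G, (fun a => x * a * x⁻¹) '' ((H : Set G) \ ((H ⊓ N : Subgroup G) : Set G)) := by
  have hconj (g : G) (hg : g ∉ N) := exists_conj_eq_of_notMem hHN hFW hg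
  refine ⟨hconj, ?_⟩
  rw [coe_inf, Set.sdiff_self_inter]
  ext g
  simp only [Set.mem_ofPred_eq, Set.mem_iUnion, Set.mem_image, Set.mem_sdiff, SetLike.mem_coe]
  constructor
  · intro hg
    obtain ⟨x, a, haH, haN, rfl⟩ := hconj g hg
    exact ⟨x, a, ⟨haH, haN⟩, rfl⟩
  · rintro ⟨x, a, ⟨-, haN⟩, rfl⟩
    exact conj_notMem_of_notMem x haN
end

section
/- Let G be a finite group with normal subgroups N ≤ M, primes p ≠ q, and Sylow subgroups P ∈ Syl_p(G), Q ∈ Syl_q(G), such that G = MP, M = NQ, and both (G, P, P ∩ M) and (M, Q, Q ∩ N) are Frobenius-Wielandt triples. Then N_G(Q) ∩ M = Q and N_G(Q) is a Frobenius group with Frobenius kernel Q. -/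
open Subgroup

lemma mem_conj_map' {G : Type*} [Group G] {S : Subgroup G} {g x : G} :
    x ∈ S.map (MulAut.conj g).toMonoidHom ↔ g⁻¹ * x * g ∈ S := by
  constructor
  · rintro ⟨y, hy, rfl⟩
    simpa [mul_assoc] using hy
  · intro h
    exact ⟨g⁻¹ * x * g, h, by simp [mul_assoc]⟩

lemma sylow_eq_conj' {G : Type*} [Group G] [Finite G] {p : ℕ} [Fact p.Prime]
    (P R : Sylow p G) :
    ∃ g : G, (R : Subgroup G) = (P : Subgroup G).map (MulAut.conj g).toMonoidHom := by
  obtain ⟨g, hg⟩ := MulAction.exists_smul_eq G P R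
  refine ⟨g, ?_⟩
  rw [← hg, Sylow.coe_subgroup_smul]
  ext x
  rw [Subgroup.mem_pointwise_smul_iff_inv_smul_mem, mem_conj_map']
  simp [MulAut.smul_def]

lemma fw_conj' {G : Type*} [Group G] {P M : Subgroup G} [M.Normal]
    (hFW : ∀ g : G, g ∉ P → P ⊓ P.map (MulAut.conj g).toMonoidHom ≤ P ⊓ M)
    (g h : G) (hh : h ∉ P.map (MulAut.conj g).toMonoidHom) :
    P.map (MulAut.conj g).toMonoidHom ⊓
      (P.map (MulAut.conj g).toMonoidHom).map (MulAut.conj h).toMonoidHom ≤ M := by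
  intro x hx
  rw [Subgroup.mem_inf] at hx
  obtain ⟨hx1, hx2⟩ := hx
  rw [mem_conj_map'] at hx1
  rw [mem_conj_map', mem_conj_map'] at hx2
  have hu : g⁻¹ * h * g ∉ P := by
    intro hu
    exact hh (mem_conj_map'.2 hu)
  have hx : g⁻¹ * x * g ∈ P ⊓ P.map (MulAut.conj (g⁻¹ * h * g)).toMonoidHom := by
    refine ⟨hx1, mem_conj_map'.2 ?_⟩
    have : (g⁻¹ * h * g)⁻¹ * (g⁻¹ * x * g) * (g⁻¹ * h * g) = g⁻¹ * (h⁻¹ * x * h) * g := by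
      group
    rw [this]
    exact hx2
  have hm : g⁻¹ * x * g ∈ M := (hFW _ hu hx).2
  have := Subgroup.Normal.conj_mem ‹M.Normal› _ hm g
  simpa [mul_assoc] using this


theorem part1 {G : Type*} [Group G] [Fintype G] (N M : Subgroup G)
    [N.Normal] [M.Normal]
    {q : ℕ} [Fact q.Prime]
    (Q : Sylow q G) (hQM : (Q : Subgroup G) ≤ M)
    (hlt : ((Q : Subgroup G) ⊓ N).subgroupOf M < (Q : Subgroup G).subgroupOf M)
    (hfw : ∀ g : M, g ∉ (Q : Subgroup G).subgroupOf M →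
      (Q : Subgroup G).subgroupOf M ⊓
        ((Q : Subgroup G).subgroupOf M).map (MulAut.conj g).toMonoidHom ≤
        ((Q : Subgroup G) ⊓ N).subgroupOf M) :
    Subgroup.normalizer ((Q : Subgroup G) : Set G) ⊓ M = Q := by
  refine le_antisymm ?_ (le_inf le_normalizer hQM)
  rintro x ⟨hx1, hx2⟩
  by_contra hxQ
  have h := hfw ⟨x, hx2⟩ (by simpa [Subgroup.mem_subgroupOf] using hxQ)
  have hle : (Q : Subgroup G).subgroupOf M ≤
      ((Q : Subgroup G).subgroupOf M).map (MulAut.conj (⟨x, hx2⟩ : M)).toMonoidHom := by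
    intro z hz
    rw [mem_conj_map', Subgroup.mem_subgroupOf]
    have hz' : (z : G) ∈ (Q : Subgroup G) := hz
    have := (Subgroup.mem_normalizer_iff.1 (inv_mem hx1) (z : G)).1 hz'
    simpa [mul_assoc] using this
  have hfinal : (Q : Subgroup G).subgroupOf M ≤ ((Q : Subgroup G) ⊓ N).subgroupOf M :=
    fun z hz => h ⟨hz, hle hz⟩
  exact absurd (hlt.trans_le hfinal) (lt_irrefl _)

theorem part2 {G : Type*} [Group G] [Fintype G] (N M : Subgroup G)
    [N.Normal] [M.Normal]
    {p q : ℕ} [Fact p.Prime] [Fact q.Prime] (hpq : p ≠ q)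
    (P : Sylow p G) (Q : Sylow q G) (hQM : (Q : Subgroup G) ≤ M)
    (hG : M ⊔ (P : Subgroup G) = ⊤)
    (hMtop : M ≠ ⊤) (hQbot : (Q : Subgroup G) ≠ ⊥)
    (hfwP : ∀ g : G, g ∉ (P : Subgroup G) →
      (P : Subgroup G) ⊓ (P : Subgroup G).map (MulAut.conj g).toMonoidHom ≤ (P : Subgroup G) ⊓ M)
    (key : Subgroup.normalizer ((Q : Subgroup G) : Set G) ⊓ M = Q) :
    IsFrobeniusKernelIn
      ((Q : Subgroup G).subgroupOf (Subgroup.normalizer ((Q : Subgroup G) : Set G))) := by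
  set H : Subgroup G := Subgroup.normalizer ((Q : Subgroup G) : Set G) with hH
  set K : Subgroup H := (Q : Subgroup G).subgroupOf H with hK
  have hQH : (Q : Subgroup G) ≤ H := le_normalizer
  -- Frattini
  have hFr : H ⊔ M = ⊤ := Sylow.normalizer_sup_eq_top' Q hQM
  have hQltH : (Q : Subgroup G) < H := by
    refine lt_of_le_of_ne hQH fun h => ?_
    apply hMtop
    have : H ≤ M := h ▸ hQM
    rw [eq_top_iff, ← hFr]
    exact sup_le this le_rfl
  -- basic facts on K
  have hKM : K = M.subgroupOf H := by
    ext z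
    simp only [hK, Subgroup.mem_subgroupOf]
    constructor
    · exact fun h => hQM h
    · intro h
      have : (z : G) ∈ H ⊓ M := ⟨z.2, h⟩
      rwa [key] at this
  have hKbot : ⊥ < K := by
    refine bot_lt_iff_ne_bot.2 fun h => hQbot ?_
    rw [hK, Subgroup.subgroupOf_eq_bot] at h
    exact (disjoint_self.1 (h.mono_right hQH))
  have hKtop : K < ⊤ := by
    refine lt_top_iff_ne_top.2 fun h => ?_
    rw [hK, Subgroup.subgroupOf_eq_top] at h
    exact hQltH.not_ge h
  -- the复 complement
  obtain ⟨P₀⟩ : Nonempty (Sylow p H) := inferInstance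
  set C : Subgroup H := (P₀ : Subgroup H) with hC
  set Pimg : Subgroup G := C.map H.subtype with hPimg
  have hPimgP : IsPGroup p Pimg := P₀.2.map _
  obtain ⟨P', hP'⟩ := hPimgP.exists_le_sylow
  -- (P' ⊓ H).subgroupOf H = C
  have hP'pg : IsPGroup p (((P' : Subgroup G) ⊓ H).subgroupOf H) :=
    ((P'.2.to_le inf_le_left).of_equiv (Subgroup.subgroupOfEquivOfLe inf_le_right).symm)
  have hCle : C ≤ ((P' : Subgroup G) ⊓ H).subgroupOf H := by
    intro c hc
    rw [Subgroup.mem_subgroupOf]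
    exact ⟨hP' ⟨c, hc, rfl⟩, c.2⟩
  have hmax : ((P' : Subgroup G) ⊓ H).subgroupOf H = C := P₀.3 hP'pg hCle
  -- K is a q-group, C is a p-group
  have hKq : IsPGroup q K :=
    Q.2.of_equiv (Subgroup.subgroupOfEquivOfLe hQH).symm
  -- FW property for P'
  obtain ⟨g, hg⟩ := sylow_eq_conj' P P'
  refine ⟨Subgroup.normal_in_normalizer, hKbot, hKtop, C, ?_, ?_, ?_⟩
  · -- malnormality
    intro x hx
    have hxP' : (x : G) ∉ (P' : Subgroup G) := by
      intro h
      apply hx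
      have : x ∈ ((P' : Subgroup G) ⊓ H).subgroupOf H :=
        Subgroup.mem_subgroupOf.2 ⟨h, x.2⟩
      rwa [hmax] at this
    rw [eq_bot_iff]
    intro y hy
    rw [Subgroup.mem_inf] at hy
    obtain ⟨hy1, hy2⟩ := hy
    rw [mem_conj_map'] at hy2
    have hyP' : (y : G) ∈ (P' : Subgroup G) := hP' ⟨y, hy1, rfl⟩
    have hyc : (y : G) ∈ (P' : Subgroup G).map (MulAut.conj (x : G)).toMonoidHom := by
      rw [mem_conj_map']
      have : ((x⁻¹ * y * x : H) : G) ∈ Pimg := ⟨_, hy2, rfl⟩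
      have h2 : ((x⁻¹ * y * x : H) : G) = (x : G)⁻¹ * y * x := by
        push_cast; ring_nf
      rw [h2] at this
      exact hP' this
    have hyM : (y : G) ∈ M := by
      rw [hg] at hyP' hyc hxP'
      exact fw_conj' hfwP g (x : G) hxP' ⟨hyP', hyc⟩
    have hyQ : (y : G) ∈ (Q : Subgroup G) := by
      have : (y : G) ∈ H ⊓ M := ⟨y.2, hyM⟩
      rwa [key] at this
    have hdisj : Disjoint (P' : Subgroup G) (Q : Subgroup G) :=
      IsPGroup.disjoint_of_ne p q hpq _ _ P'.2 Q.2
    have : (y : G) ∈ (⊥ : Subgroup G) := hdisj.le_bot ⟨hyP', hyQ⟩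
    rw [Subgroup.mem_bot] at this
    exact Subgroup.mem_bot.2 (Subtype.ext this)
  · -- K ⊔ C = ⊤
    -- index argument
    have hKidx : K.index ∣ M.index := by
      rw [hKM]
      exact Subgroup.relIndex_dvd_index_of_normal M H
    have hMidx : M.index ∣ Nat.card (P : Subgroup G) := by
      have hsurj : Function.Surjective
          ((QuotientGroup.mk' M).comp (P : Subgroup G).subtype) := by
        intro z
        obtain ⟨w, rfl⟩ := QuotientGroup.mk'_surjective M z
        have : w ∈ M ⊔ (P : Subgroup G) := hG ▸ Subgroup.mem_top w
        rw [← SetLike.mem_coe, Subgroup.normal_mul] at this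
        obtain ⟨m, hm, pp, hpp, rfl⟩ := this
        refine ⟨⟨pp, hpp⟩, ?_⟩
        simp [QuotientGroup.mk'_apply, QuotientGroup.eq, mul_assoc]
        exact hm
      exact Subgroup.card_dvd_of_surjective _ hsurj
    obtain ⟨n, hn⟩ := IsPGroup.iff_card.mp P.2
    have hKp : K.index ∣ p ^ n := by
      rw [← hn]
      exact hKidx.trans hMidx
    have h1 : (K ⊔ C).index ∣ p ^ n := (Subgroup.index_dvd_of_le le_sup_left).trans hKp
    have h2 : (K ⊔ C).index ∣ C.index := Subgroup.index_dvd_of_le le_sup_right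
    haveI : (C : Subgroup H).FiniteIndex := inferInstance
    have hpC : ¬ p ∣ C.index := P₀.not_dvd_index
    obtain ⟨j, hj, hjeq⟩ := (Nat.dvd_prime_pow (Fact.out : p.Prime)).1 h1
    have hone : (K ⊔ C).index = 1 := by
      rcases Nat.eq_zero_or_pos j with rfl | hjpos
      · simpa using hjeq
      · exact absurd (dvd_trans (dvd_pow_self p hjpos.ne') (hjeq ▸ h2)) hpC
    exact Subgroup.index_eq_one.1 hone
  · -- K ⊓ C = ⊥
    exact (IsPGroup.disjoint_of_ne q p (Ne.symm hpq) _ _ hKq P₀.2).eq_bot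

theorem stmt_7 {G : Type*} [Group G] [Fintype G] (N M : Subgroup G)
    [N.Normal] [M.Normal] (hNM : N ≤ M)
    {p q : ℕ} [Fact p.Prime] [Fact q.Prime] (hpq : p ≠ q)
    (P : Sylow p G) (Q : Sylow q G)
    (hG : M ⊔ (P : Subgroup G) = ⊤) (hM : N ⊔ (Q : Subgroup G) = M)
    (h1 : IsFWTriple (P : Subgroup G) ((P : Subgroup G) ⊓ M))
    (h2 : IsFWTriple ((Q : Subgroup G).subgroupOf M)
      (((Q : Subgroup G) ⊓ N).subgroupOf M)) :
    Subgroup.normalizer ((Q : Subgroup G) : Set G) ⊓ M = Q ∧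
    IsFrobeniusKernelIn
      ((Q : Subgroup G).subgroupOf (Subgroup.normalizer ((Q : Subgroup G) : Set G))) := by

  obtain ⟨hle2, hn2, hlt2, htop2, hfw2⟩ := h2
  obtain ⟨hle1, hn1, hlt1, htop1, hfw1⟩ := h1
  have hQM : (Q : Subgroup G) ≤ M := le_sup_right.trans hM.le
  have key := part1 N M Q hQM hlt2 hfw2
  have hMtop : M ≠ ⊤ := fun h => hlt1.ne (by rw [h, inf_top_eq])
  have hQbot : (Q : Subgroup G) ≠ ⊥ := by
    intro h
    exact hlt2.ne (by rw [h, bot_inf_eq])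
  exact ⟨key, part2 N M hpq P Q hQM hG hMtop hQbot hfw1 key⟩
end

section
/- Let G be a finite group with normal subgroups N ≤ M, primes p ≠ q, and P ∈ Syl_p(G), Q ∈ Syl_q(G) such that G = MP, M = NQ, and (G, P, P ∩ M) and (M, Q, Q ∩ N) are Frobenius-Wielandt triples. Then G/N is a Frobenius group with Frobenius kernel M/N. -/
open Subgroup

lemma mem_map_conj' {X : Type*} [Group X] {H : Subgroup X} {g x : X} :
    x ∈ H.map (MulAut.conj g).toMonoidHom ↔ g⁻¹ * x * g ∈ H := by
  constructor
  · rintro ⟨y, hy, rfl⟩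
    simpa [MulAut.conj_apply, mul_assoc] using hy
  · intro h
    exact ⟨g⁻¹ * x * g, h, by simp [MulAut.conj_apply]; group⟩

lemma map_conj_mul' {X : Type*} [Group X] (H : Subgroup X) (a b : X) :
    H.map (MulAut.conj (a * b)).toMonoidHom
      = (H.map (MulAut.conj b).toMonoidHom).map (MulAut.conj a).toMonoidHom := by
  ext x
  simp only [mem_map_conj']
  constructor <;> intro h <;> simpa [mul_assoc] using h

lemma map_conj_self' {X : Type*} [Group X] (H : Subgroup X) {h : X} (hh : h ∈ H) :
    H.map (MulAut.conj h).toMonoidHom = H := by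
  ext x
  rw [mem_map_conj']
  constructor
  · intro hx
    have := H.mul_mem (H.mul_mem hh hx) (H.inv_mem hh)
    simpa [mul_assoc] using this
  · intro hx
    exact H.mul_mem (H.mul_mem (H.inv_mem hh) hx) hh

lemma sylow_smul_coe' {p : ℕ} [Fact p.Prime] {X : Type*} [Group X] (g : X) (P : Sylow p X) :
    ((g • P : Sylow p X) : Subgroup X) = (P : Subgroup X).map (MulAut.conj g).toMonoidHom := by
  ext x
  rw [Sylow.smul_def, Sylow.pointwise_smul_def, mem_map_conj',
    Subgroup.mem_pointwise_smul_iff_inv_smul_mem]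
  simp [MulAut.smul_def]

lemma isPGroup_zpowers' {p : ℕ} [Fact p.Prime] {X : Type*} [Group X] {x : X}
    (h : ∃ n, x ^ p ^ n = 1) : IsPGroup p (zpowers x) := by
  obtain ⟨n, hn⟩ := h
  rintro ⟨g, hg⟩
  obtain ⟨k, rfl⟩ := hg
  refine ⟨n, ?_⟩
  ext
  push_cast
  rw [← zpow_natCast, ← zpow_mul, mul_comm, zpow_mul, zpow_natCast, hn, one_zpow]

theorem stmt_8 {G : Type*} [Group G] [Fintype G] (N M : Subgroup G)
    [N.Normal] [M.Normal] (hNM : N ≤ M)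
    {p q : ℕ} [Fact p.Prime] [Fact q.Prime] (hpq : p ≠ q)
    (P : Sylow p G) (Q : Sylow q G)
    (hG : M ⊔ (P : Subgroup G) = ⊤) (hM : N ⊔ (Q : Subgroup G) = M)
    (h1 : IsFWTriple (P : Subgroup G) ((P : Subgroup G) ⊓ M))
    (h2 : IsFWTriple ((Q : Subgroup G).subgroupOf M)
      (((Q : Subgroup G) ⊓ N).subgroupOf M)) :
    IsFrobeniusKernelIn (M.map (QuotientGroup.mk' N)) := by
  classical
  set φ := QuotientGroup.mk' N with hφdef
  have hφ : Function.Surjective φ := QuotientGroup.mk'_surjective N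
  set K : Subgroup (G ⧸ N) := M.map φ with hK
  set C : Subgroup (G ⧸ N) := (P : Subgroup G).map φ with hC
  have hone : ∀ g : G, φ g = 1 ↔ g ∈ N := fun g => QuotientGroup.eq_one_iff g
  have hNbot : N.map φ = ⊥ := by
    rw [eq_bot_iff]
    rintro _ ⟨n, hn, rfl⟩
    simpa [Subgroup.mem_bot] using (hone n).mpr hn
  have hKQ : K = (Q : Subgroup G).map φ := by
    rw [hK, ← hM, Subgroup.map_sup, hNbot, bot_sup_eq]
  have hKq : IsPGroup q K := hKQ ▸ Q.2.map φ
  have hCp : IsPGroup p C := P.2.map φ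
  have hdisj : Disjoint C K := IsPGroup.disjoint_of_ne p q hpq _ _ hCp hKq
  have hPM : (P : Subgroup G) ⊓ M ≤ N := by
    intro x hx
    have hx1 : φ x ∈ C := Subgroup.mem_map_of_mem φ hx.1
    have hx2 : φ x ∈ K := Subgroup.mem_map_of_mem φ hx.2
    have hmem : φ x ∈ C ⊓ K := ⟨hx1, hx2⟩
    rw [disjoint_iff.mp hdisj, Subgroup.mem_bot] at hmem
    exact (hone x).mp hmem
  -- key group-theoretic step, via a Sylow argument in `P^m ⊔ N`
  have key : ∀ m : G, m ∈ M → m ∉ N → ∀ u : G, u ∈ (P : Subgroup G) →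
      u ∈ ((P : Subgroup G).map (MulAut.conj m).toMonoidHom ⊔ N) → u ∈ N := by
    intro m hmM hmN u huP huT
    set Pm : Subgroup G := (P : Subgroup G).map (MulAut.conj m).toMonoidHom with hPm
    set T : Subgroup G := Pm ⊔ N with hT
    have hPmT : ((m • P : Sylow p G) : Subgroup G) ≤ T := by
      rw [sylow_smul_coe']
      exact le_sup_left
    set PmS : Sylow p ↥T := (m • P).subtype hPmT with hPmS
    set u' : ↥T := ⟨u, huT⟩ with hu'
    have hupow : ∃ n, u' ^ p ^ n = 1 := by
      obtain ⟨n, hn⟩ := P.2 ⟨u, huP⟩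
      have hupow' : u ^ p ^ n = 1 := by
        simpa using congrArg Subtype.val hn
      exact ⟨n, Subtype.ext (by simpa using hupow')⟩
    obtain ⟨S, hS⟩ := (isPGroup_zpowers' hupow).exists_le_sylow
    obtain ⟨t, ht⟩ := MulAction.exists_smul_eq (↥T) PmS S
    have hu'S : u' ∈ (S : Subgroup ↥T) := hS (Subgroup.mem_zpowers u')
    rw [← ht, sylow_smul_coe', mem_map_conj'] at hu'S
    -- hu'S : t⁻¹ * u' * t ∈ PmS
    have hyPm : ((t⁻¹ * u' * t : ↥T) : G) ∈ Pm := by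
      have h' := hu'S
      rw [hPmS, Sylow.coe_subtype, Subgroup.mem_subgroupOf] at h'
      rwa [sylow_smul_coe'] at h'
    have htT : (t : G) ∈ ((N ⊔ Pm : Subgroup G) : Set G) := by
      rw [sup_comm N Pm]
      exact t.2
    rw [Subgroup.normal_mul] at htT
    obtain ⟨n, hn, w2, hw2, hnw⟩ := htT
    have hueq : (n : G)⁻¹ * u * n = w2 * ((t⁻¹ * u' * t : ↥T) : G) * w2⁻¹ := by
      have hy : ((t⁻¹ * u' * t : ↥T) : G) = (t : G)⁻¹ * u * (t : G) := by
        push_cast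
        rfl
      rw [hy, ← hnw]
      group
    have humem : u ∈ (P : Subgroup G).map (MulAut.conj (n * m)).toMonoidHom := by
      rw [map_conj_mul', ← hPm, mem_map_conj', hueq]
      exact Pm.mul_mem (Pm.mul_mem hw2 hyPm) (Pm.inv_mem hw2)
    have hnmM : n * m ∈ M := M.mul_mem (hNM hn) hmM
    have hnmP : n * m ∉ (P : Subgroup G) := by
      intro hc
      have : n * m ∈ N := hPM ⟨hc, hnmM⟩
      exact hmN (by simpa using N.mul_mem (N.inv_mem hn) this)
    exact hPM (h1.2.2.2.2 (n * m) hnmP ⟨huP, humem⟩)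
  -- C ∩ C^{φ m} = ⊥ for m ∈ M \ N
  have claimA : ∀ m : G, m ∈ M → m ∉ N →
      C ⊓ C.map (MulAut.conj (φ m)).toMonoidHom = ⊥ := by
    intro m hmM hmN
    rw [eq_bot_iff]
    rintro y ⟨hy1, hy2⟩
    obtain ⟨u, huP, rfl⟩ := hy1
    have hy2' : φ u ∈ C.map (MulAut.conj (φ m)).toMonoidHom := hy2
    rw [mem_map_conj'] at hy2'
    obtain ⟨v, hvP, hv⟩ := hy2'
    have hveq : φ (m * v * m⁻¹) = φ u := by
      have : φ m * ((φ m)⁻¹ * φ u * φ m) * (φ m)⁻¹ = φ u := by group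
      rw [map_mul, map_mul, map_inv, hv, this]
    have hd : (m * v * m⁻¹)⁻¹ * u ∈ N := by
      rw [← hone]
      rw [map_mul, map_inv, hveq]
      group
    have huT : u ∈ ((P : Subgroup G).map (MulAut.conj m).toMonoidHom ⊔ N) := by
      have h1m : m * v * m⁻¹ ∈ (P : Subgroup G).map (MulAut.conj m).toMonoidHom :=
        ⟨v, hvP, rfl⟩
      have heq : (m * v * m⁻¹) * ((m * v * m⁻¹)⁻¹ * u) = u := by group
      rw [← heq]
      exact Subgroup.mul_mem _ (Subgroup.mem_sup_left h1m) (Subgroup.mem_sup_right hd)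
    have := key m hmM hmN u huP huT
    simpa [Subgroup.mem_bot] using (hone u).mpr this
  haveI hKnorm : K.Normal := Subgroup.Normal.map ‹M.Normal› φ hφ
  have hsupKC : K ⊔ C = ⊤ := by
    rw [hK, hC, ← Subgroup.map_sup, hG, Subgroup.map_top_of_surjective φ hφ]
  have hinf : K ⊓ C = ⊥ := by
    rw [inf_comm]
    exact disjoint_iff.mp hdisj
  refine ⟨hKnorm, ?_, ?_, C, ?_, hsupKC, hinf⟩
  · -- ⊥ < K
    rw [bot_lt_iff_ne_bot]
    intro hbot
    obtain ⟨x, hxQ, hxNot⟩ := SetLike.exists_of_lt h2.2.2.1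
    rw [Subgroup.mem_subgroupOf] at hxQ
    have hmem : φ (x : G) ∈ K := Subgroup.mem_map_of_mem φ x.2
    rw [hbot, Subgroup.mem_bot, hone] at hmem
    exact hxNot (by rw [Subgroup.mem_subgroupOf]; exact ⟨hxQ, hmem⟩)
  · -- K < ⊤
    rw [lt_top_iff_ne_top]
    intro htop
    have hMtop : M = ⊤ := by
      rw [eq_top_iff]
      intro g _
      have : φ g ∈ K := by rw [htop]; trivial
      obtain ⟨m', hm', hEq⟩ := this
      have : m'⁻¹ * g ∈ N := by
        rw [← hone, map_mul, map_inv, hEq]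
        group
      have : g = m' * (m'⁻¹ * g) := by group
      rw [this]
      exact M.mul_mem hm' (hNM ‹m'⁻¹ * g ∈ N›)
    have := h1.2.2.1
    rw [hMtop, inf_top_eq] at this
    exact lt_irrefl _ this
  · -- malnormality of C
    intro x hx
    have hxtop : x ∈ ((⊤ : Subgroup (G ⧸ N)) : Set (G ⧸ N)) := trivial
    rw [← hsupKC, Subgroup.normal_mul] at hxtop
    obtain ⟨k, hk, c, hc, rfl⟩ := hxtop
    obtain ⟨m, hmM, rfl⟩ := hk
    show C ⊓ C.map (MulAut.conj (φ m * c)).toMonoidHom = ⊥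
    by_cases hmN : m ∈ N
    · exact absurd (show φ m * c ∈ C by
        rw [(hone m).mpr hmN, one_mul]; exact hc) hx
    · rw [map_conj_mul' C (φ m) c, map_conj_self' C hc]
      exact claimA m hmM hmN
end

section
/- Let G be a finite group with normal subgroups N ≤ M, primes p ≠ q, and P ∈ Syl_p(G), Q ∈ Syl_q(G) such that G = MP, M = NQ, and (G, P, P ∩ M) and (M, Q, Q ∩ N) are Frobenius-Wielandt triples. If O^p(N) < N (the smallest normal subgroup of N with p-group quotient is proper), then G/O^p(N) is a 2-Frobenius group. -/
open Subgroup

/-- The `p`-residual `O^p(X)`: the smallest normal subgroup of `X` whose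
quotient is a `p`-group (for finite `X`, `X/K` is a `p`-group iff some
`p`-power power of every element lies in `K`). -/
def pResidual (p : ℕ) (X : Type*) [Group X] : Subgroup X :=
  ⨅ K ∈ {K : Subgroup X | K.Normal ∧ ∃ n : ℕ, ∀ g : X, g ^ p ^ n ∈ K}, K


/-!
Both Frobenius structures come from one principle. If `P` is a Sylow subgroup of a finite group
with `P ∩ P^g ≤ ker σ` for all `g ∉ P`, then `σ(P)` meets each of its conjugates `σ(P)^{σ g}`,
`σ g ∉ σ(P)`, trivially: an element of the intersection lifts to a `p`-element
`u ∈ P ∩ (P · ker σ)^g`, and Sylow's theorem inside `(P · ker σ)^g` puts `u` into some `P^{sg}`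
with `sg ∉ P`. This is applied to `G → G/N` with the `p`-Sylow `P` (where `P ∩ M ≤ N` because
`M/N` is a `q`-group) and to `M → M/O^p(N)` with the `q`-Sylow `Q` (where `Q ∩ N ≤ O^p(N)`
because `N/O^p(N)` is a `p`-group).
-/

namespace Subgroup

variable {G H : Type*} [Group G] [Group H]

theorem map_lt_map_of_ker_le {f : G →* H} {A B : Subgroup G} (hA : f.ker ≤ A) (hAB : A < B) :
    A.map f < B.map f := by
  refine lt_of_le_not_ge (map_mono hAB.le) fun hBA => hAB.not_ge ?_
  rw [map_le_map_iff', sup_eq_left.mpr hA] at hBA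
  exact le_sup_left.trans hBA

theorem mem_of_map_mem_map_of_ker_le {f : G →* H} {A : Subgroup G} (hA : f.ker ≤ A) {x : G}
    (hx : f x ∈ A.map f) : x ∈ A := by
  rwa [← mem_comap, comap_map_eq, sup_eq_left.mpr hA] at hx

theorem map_subgroupMap_subgroupOf (f : G →* H) {A B : Subgroup G} (hAB : A ≤ B) :
    (A.subgroupOf B).map (f.subgroupMap B) = (A.map f).subgroupOf (B.map f) := by
  ext ⟨y, hy⟩
  constructor
  · rintro ⟨x, hx, hxy⟩
    exact ⟨x, hx, congrArg Subtype.val hxy⟩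
  · rintro ⟨x, hx, hxy⟩
    exact ⟨⟨x, hAB hx⟩, hx, Subtype.ext hxy⟩

theorem map_lt_top_of_ker_le {f : G →* H} (hf : Function.Surjective f) {A : Subgroup G}
    (hA : f.ker ≤ A) (hA_ne_top : A ≠ ⊤) : A.map f < ⊤ := by
  simpa only [map_top_of_surjective f hf] using
    map_lt_map_of_ker_le hA (lt_top_iff_ne_top.mpr hA_ne_top)

end Subgroup

namespace Sylow

open Subgroup

variable {G : Type*} [Group G] [Finite G] {p : ℕ} [Fact p.Prime]

theorem exists_mem_le_smul {P : Sylow p G} {S : Subgroup G} (hPS : (P : Subgroup G) ≤ S)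
    {H : Subgroup G} (hH : IsPGroup p H) (hHS : H ≤ S) : ∃ s ∈ S, H ≤ ↑((s : G) • P) := by
  obtain ⟨B, hB⟩ := (hH.comap_subtype (K := S)).exists_le_sylow
  obtain ⟨s, rfl⟩ := MulAction.exists_smul_eq S (P.subtype hPS) B
  refine ⟨s, s.2, fun h hh => ?_⟩
  have := hB (show (⟨h, hHS hh⟩ : S) ∈ H.comap S.subtype from hh)
  rwa [smul_subtype, coe_subtype, mem_subgroupOf] at this

theorem mem_of_mem_map_conj_sup {P : Sylow p G} {R : Subgroup G}
    (hP : ∀ g : G, g ∉ P →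
      (P : Subgroup G) ⊓ (P : Subgroup G).map (MulAut.conj g).toMonoidHom ≤ R)
    {g u : G} (hg : g ∉ (P : Subgroup G) ⊔ R) (hu : u ∈ P)
    (hug : u ∈ ((P : Subgroup G) ⊔ R).map (MulAut.conj g).toMonoidHom) : u ∈ R := by
  have hgP : ((g • P : Sylow p G) : Subgroup G) ≤
      ((P : Subgroup G) ⊔ R).map (MulAut.conj g).toMonoidHom :=
    map_mono le_sup_left
  obtain ⟨s, ⟨y, hy, rfl⟩, hus⟩ := exists_mem_le_smul hgP
    (P.isPGroup'.to_le (zpowers_le.mpr hu)) (zpowers_le.mpr hug)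
  rw [smul_smul] at hus
  refine hP _ (fun hyg => hg ?_) ⟨hu, hus (mem_zpowers u)⟩
  rw [show g = (g * y * g⁻¹ * g) * y⁻¹ by group]
  exact mul_mem (le_sup_left (b := R) hyg) (inv_mem hy)

variable {Y : Type*} [Group Y] {σ : G →* Y}

theorem map_inf_map_conj_eq_bot (hσ : Function.Surjective σ) (P : Sylow p G)
    (hP : ∀ g : G, g ∉ P →
      (P : Subgroup G) ⊓ (P : Subgroup G).map (MulAut.conj g).toMonoidHom ≤ σ.ker)
    {y : Y} (hy : y ∉ (P : Subgroup G).map σ) :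
    (P : Subgroup G).map σ ⊓ ((P : Subgroup G).map σ).map (MulAut.conj y).toMonoidHom = ⊥ := by
  obtain ⟨g, rfl⟩ := hσ y
  have hg : g ∉ (P : Subgroup G) ⊔ σ.ker := by
    rwa [← comap_map_eq, mem_comap]
  rw [eq_bot_iff]
  rintro _ ⟨⟨u, hu, rfl⟩, v, hv, hvu⟩
  have hconj : g⁻¹ * u * g ∈ (P : Subgroup G) ⊔ σ.ker := by
    rw [← comap_map_eq, mem_comap]
    simp only [MulEquiv.coe_toMonoidHom, MulAut.conj_apply] at hvu
    have : σ (g⁻¹ * u * g) = v := by rw [map_mul, map_mul, map_inv, ← hvu]; group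
    exact this ▸ hv
  have hug : u ∈ ((P : Subgroup G) ⊔ σ.ker).map (MulAut.conj g).toMonoidHom :=
    ⟨_, hconj, by simp [mul_assoc]⟩
  exact mem_of_mem_map_conj_sup hP hg hu hug

end Sylow

theorem isFrobeniusKernelIn_map {G Y : Type*} [Group G] [Finite G] [Group Y] {p : ℕ}
    [Fact p.Prime] {σ : G →* Y} (hσ : Function.Surjective σ) (P : Sylow p G) (K : Subgroup G)
    [K.Normal] (hσK : σ.ker ≤ K) (hKP : K ⊔ P = ⊤) (hPK : (P : Subgroup G) ⊓ K ≤ σ.ker)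
    (hP : ∀ g : G, g ∉ P →
      (P : Subgroup G) ⊓ (P : Subgroup G).map (MulAut.conj g).toMonoidHom ≤ σ.ker)
    (hK : ¬ K ≤ σ.ker) (hK_ne_top : K ≠ ⊤) :
    IsFrobeniusKernelIn (K.map σ) := by
  refine ⟨.map ‹_› σ hσ, bot_lt_iff_ne_bot.mpr (mt (map_eq_bot_iff K).mp hK), ?_,
    (P : Subgroup G).map σ, fun y hy => P.map_inf_map_conj_eq_bot hσ hP hy, ?_, ?_⟩
  · exact map_lt_top_of_ker_le hσ hσK hK_ne_top
  · rw [← Subgroup.map_sup, hKP, map_top_of_surjective σ hσ]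
  · rw [eq_bot_iff]
    rintro _ ⟨hu, u, huP, rfl⟩
    exact hPK ⟨huP, mem_of_map_mem_map_of_ker_le hσK hu⟩

theorem isFrobeniusKernelIn_subgroupOf_map {G Y : Type*} [Group G] [Finite G] [Group Y] {p : ℕ}
    [Fact p.Prime] (f : G →* Y) (P : Sylow p G) {K H : Subgroup G} [K.Normal] (hKH : K ≤ H)
    (hfK : f.ker ≤ K) (hKP : K ⊔ P = H) (hPK : (P : Subgroup G) ⊓ K ≤ f.ker)
    (hP : ∀ g : H, g ∉ (P : Subgroup G).subgroupOf H →
      (P : Subgroup G).subgroupOf H ⊓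
        ((P : Subgroup G).subgroupOf H).map (MulAut.conj g).toMonoidHom ≤ f.ker.subgroupOf H)
    (hK : ¬ K ≤ f.ker) (hHK : ¬ H ≤ K) :
    IsFrobeniusKernelIn ((K.map f).subgroupOf (H.map f)) := by
  have hPH : (P : Subgroup G) ≤ H := hKP ▸ le_sup_right
  rw [← map_subgroupMap_subgroupOf f hKH]
  have hKP' : K.subgroupOf H ⊔ (P.subtype hPH : Subgroup H) = ⊤ := by
    rw [Sylow.coe_subtype, ← subgroupOf_sup hKH hPH, hKP, subgroupOf_self]
  refine isFrobeniusKernelIn_map (f.subgroupMap_surjective H) (P.subtype hPH) (K.subgroupOf H)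
    ?_ hKP' ?_ ?_ ?_ (mt subgroupOf_eq_top.mp hHK) <;> rw [ker_subgroupMap]
  · exact fun x hx => hfK hx
  · exact fun x hx => hPK ⟨hx.1, hx.2⟩
  · exact hP
  · obtain ⟨x, hxK, hxf⟩ := SetLike.not_le_iff_exists.mp hK
    exact fun h => hxf (h (x := ⟨x, hKH hxK⟩) hxK)

theorem mem_pResidual_of_coprime_orderOf {p : ℕ} {X : Type*} [Group X] {x : X}
    (hx : p.Coprime (orderOf x)) : x ∈ pResidual p X := by
  simp only [pResidual, mem_iInf]
  rintro K ⟨-, n, hn⟩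
  obtain ⟨m, hm⟩ := exists_pow_eq_self_of_coprime (hx.pow_left n)
  exact hm ▸ pow_mem (hn x) m

namespace IsPGroup

variable {G : Type*} [Group G] {p q : ℕ}

theorem inf_le_map_pResidual {Q : Subgroup G} (hQ : IsPGroup q Q) (hqp : q.Coprime p)
    (N : Subgroup G) : Q ⊓ N ≤ (pResidual p N).map N.subtype := by
  rintro u ⟨huQ, huN⟩
  refine ⟨⟨u, huN⟩, mem_pResidual_of_coprime_orderOf ?_, rfl⟩
  rw [orderOf_mk, ← orderOf_mk u huQ]
  exact (hQ.orderOf_coprime hqp _).symm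

theorem inf_le_of_le_sup [Fact p.Prime] [Fact q.Prime] (hpq : p ≠ q) {H Q N M : Subgroup G}
    [N.Normal] (hH : IsPGroup p H) (hQ : IsPGroup q Q) (hM : M ≤ N ⊔ Q) : H ⊓ M ≤ N := by
  rintro u ⟨huH, huM⟩
  set π := QuotientGroup.mk' N
  have huQ : π u ∈ Q.map π := by
    simpa [π, Subgroup.map_sup] using Subgroup.mem_map_of_mem π (hM huM)
  have hdisj := disjoint_of_ne p q hpq _ _ (hH.map π) (hQ.map π)
  exact (QuotientGroup.eq_one_iff u).mp
    (Subgroup.disjoint_def.mp hdisj (Subgroup.mem_map_of_mem π huH) huQ)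

end IsPGroup

theorem stmt_10 {G : Type*} [Group G] [Fintype G] (N M : Subgroup G)
    [N.Normal] [M.Normal] (hNM : N ≤ M)
    {p q : ℕ} [Fact p.Prime] [Fact q.Prime] (hpq : p ≠ q)
    (P : Sylow p G) (Q : Sylow q G)
    (hG : M ⊔ (P : Subgroup G) = ⊤) (hM : N ⊔ (Q : Subgroup G) = M)
    (h1 : IsFWTriple (P : Subgroup G) ((P : Subgroup G) ⊓ M))
    (h2 : IsFWTriple ((Q : Subgroup G).subgroupOf M)
      (((Q : Subgroup G) ⊓ N).subgroupOf M))
    [((pResidual p ↥N).map N.subtype).Normal]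
    (hres : (pResidual p ↥N).map N.subtype < N) :
    Is2FrobeniusGroup (G ⧸ (pResidual p ↥N).map N.subtype) := by
  set R := (pResidual p ↥N).map N.subtype
  set π := QuotientGroup.mk' R
  have hπ : π.ker = R := QuotientGroup.ker_mk' R
  have hπ_surj : Function.Surjective π := QuotientGroup.mk'_surjective R
  have hRN : R ≤ N := hres.le
  have hQN : (Q : Subgroup G) ⊓ N ≤ R :=
    Q.isPGroup'.inf_le_map_pResidual ((Nat.coprime_primes Fact.out Fact.out).mpr hpq.symm) N
  have hPM : (P : Subgroup G) ⊓ M ≤ N := P.isPGroup'.inf_le_of_le_sup hpq Q.isPGroup' hM.ge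
  have hMN : ¬ M ≤ N := by
    obtain ⟨x, hxQ, hxN⟩ := SetLike.exists_of_lt h2.2.2.1
    exact fun h => hxN ⟨hxQ, h x.2⟩
  have hM_ne_top : M ≠ ⊤ := by
    rintro rfl
    exact h1.2.2.1.ne (inf_top_eq _)
  have hNR : ¬ N ≤ π.ker := fun h => hres.not_ge (h.trans hπ.le)
  have hker : ((QuotientGroup.mk' (N.map π)).comp π).ker = N := by
    rw [← MonoidHom.comap_ker, QuotientGroup.ker_mk', comap_map_eq, hπ, sup_eq_left.mpr hRN]
  refine ⟨N.map π, M.map π, .map ‹_› π hπ_surj, .map ‹_› π hπ_surj, bot_lt_iff_ne_bot.mpr ?_,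
    map_lt_map_of_ker_le (hπ.trans_le hRN) (lt_of_le_not_ge hNM hMN), ?_, ?_, ?_⟩
  · exact mt (map_eq_bot_iff N).mp hNR
  · exact map_lt_top_of_ker_le hπ_surj (hπ.trans_le (hRN.trans hNM)) hM_ne_top
  · rw [map_map]
    exact isFrobeniusKernelIn_map (σ := (QuotientGroup.mk' (N.map π)).comp π)
      ((QuotientGroup.mk'_surjective _).comp hπ_surj) P M
      (hker.trans_le hNM) hG (hPM.trans hker.ge)
      (fun g hg => (h1.2.2.2.2 g hg).trans (hPM.trans hker.ge)) (fun h => hMN (h.trans hker.le))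
      hM_ne_top
  · exact isFrobeniusKernelIn_subgroupOf_map π Q hNM (hπ.trans_le hRN) hM (hQN.trans hπ.ge)
      (fun g hg x hx => hπ.ge (hQN (h2.2.2.2.2 g hg hx))) hNR hMN
end

section
/- Let G be a finite group and N ⊴ G with G/N solvable, and suppose every element of G \ N has prime power order with exactly two primes p, q dividing these orders. Then there exists a normal subgroup M of G with N ≤ M, and Sylow subgroups P ∈ Syl_p(G), Q ∈ Syl_q(G), such that M = NQ, G = MP, (G, P, P ∩ M) is a Frobenius-Wielandt triple, and either M = Q or (M, Q, Q ∩ N) is a Frobenius-Wielandt triple — provided G/N is a Frobenius group whose kernel is a q-group and whose complement is a p-group. -/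
/-!
Suppose every element of a finite group `H` outside a subgroup `N` is a `p`-element. If a
`p`-subgroup `V` contains some `x ∉ N`, then its normalizer is a `p`-group: for `r ∈ N` normalizing
`V`, the element `x * r` is a `p`-element and `(x * r) ^ n ≡ r ^ n` modulo `V`. Now let
`P ≠ R` be Sylow subgroups with `D = P ⊓ R ⊄ N` and `D` maximal. Since `D < P, R` and `p`-groups
satisfy the normalizer condition, a Sylow subgroup `S` containing the `p`-group `N(D)` meets both
`P` and `R` in more than `D`, so `S = P` and `S = R`. Hence distinct Sylow `p`-subgroups meet
inside `N`, which is the Frobenius–Wielandt condition for `(H, P, P ⊓ N)`.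

For the theorem, let `M` be the preimage of the Frobenius kernel `K`. Elements outside `M` are
`p`-elements (as `G/M ≅ (G/N)/K` is a `p`-group), and elements of `M ∖ N` are `q`-elements. Index
counting gives `M = N Q` and `G = M P`, and the criterion above, applied in `G` with `M` and in `M`
with `N`, yields the two triples.
-/

open Subgroup

section PrimePowerElements

variable {p q : ℕ} {X : Type*} [Group X]

theorem eq_one_of_pow_prime_pow_eq_one (hp : p.Prime) (hq : q.Prime) (hpq : p ≠ q) {x : X}
    {a b : ℕ} (ha : x ^ p ^ a = 1) (hb : x ^ q ^ b = 1) : x = 1 := by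
  have hcop : Nat.Coprime (p ^ a) (q ^ b) :=
    Nat.Coprime.pow a b ((Nat.coprime_primes hp hq).2 hpq)
  simpa [hcop] using pow_gcd_eq_one.2 ⟨ha, hb⟩

theorem Subgroup.isPGroup_iff {V : Subgroup X} : IsPGroup p V ↔ ∀ v ∈ V, ∃ k, v ^ p ^ k = 1 :=
  ⟨fun hV v hv => (hV ⟨v, hv⟩).imp fun _ hk => by simpa using congrArg Subtype.val hk,
    fun hV v => (hV v v.2).imp fun _ hk => Subtype.ext (by simpa using hk)⟩

theorem IsPGroup.ne_top_of_dvd_orderOf [Fact p.Prime] [Fact q.Prime] (hpq : p ≠ q)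
    {P : Subgroup X} (hP : IsPGroup p P) {g : X} (hg : q ∣ orderOf g) : P ≠ ⊤ := by
  intro h
  obtain ⟨k, hk⟩ := Subgroup.isPGroup_iff.1 hP g (h ▸ mem_top g)
  exact hpq ((Nat.prime_dvd_prime_iff_eq Fact.out Fact.out).1
    ((Fact.out : q.Prime).dvd_of_dvd_pow (hg.trans (orderOf_dvd_of_pow_eq_one hk)))).symm

theorem IsPGroup.le_of_forall_notMem_pow_eq_one [Fact p.Prime] [Fact q.Prime] (hpq : p ≠ q)
    {Q M : Subgroup X} (hQ : IsPGroup q Q) (hM : ∀ g ∉ M, ∃ k, g ^ p ^ k = 1) : Q ≤ M :=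
  fun y hy => by_contra fun hyM => hyM <| by
    obtain ⟨k, hk⟩ := hM y hyM
    obtain ⟨j, hj⟩ := Subgroup.isPGroup_iff.1 hQ y hy
    rw [eq_one_of_pow_prime_pow_eq_one Fact.out Fact.out hpq hk hj]
    exact one_mem M

theorem IsPGroup.quotient_of_forall_notMem {M : Subgroup X} [M.Normal]
    (hM : ∀ g ∉ M, ∃ k, g ^ p ^ k = 1) : IsPGroup p (X ⧸ M) := by
  intro y
  induction y using QuotientGroup.induction_on with
  | H g =>
    by_cases hg : g ∈ M
    · exact ⟨0, by simpa using (QuotientGroup.eq_one_iff g).2 hg⟩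
    · exact (hM g hg).imp fun k hk => by rw [← QuotientGroup.mk_pow, hk, QuotientGroup.mk_one]

theorem Subgroup.mem_of_sup_eq_top_of_pow_eq_one [Fact p.Prime] [Fact q.Prime] (hpq : p ≠ q)
    {K C : Subgroup X} [K.Normal] (hKC : K ⊔ C = ⊤) (hC : IsPGroup p C) {y : X} {j : ℕ}
    (hy : y ^ q ^ j = 1) : y ∈ K := by
  have hsurj : Function.Surjective ((QuotientGroup.mk' K).comp C.subtype) := by
    intro z
    obtain ⟨x, rfl⟩ := QuotientGroup.mk'_surjective K z
    obtain ⟨k, hk, c, hc, rfl⟩ := mem_sup_of_normal_left.1 (hKC ▸ mem_top x)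
    refine ⟨⟨c, hc⟩, ?_⟩
    simp [(QuotientGroup.eq_one_iff k).2 hk]
  obtain ⟨i, hi⟩ := hC.of_surjective _ hsurj (y : X ⧸ K)
  refine (QuotientGroup.eq_one_iff y).1 <|
    eq_one_of_pow_prime_pow_eq_one Fact.out Fact.out hpq (b := j) hi ?_
  rw [← QuotientGroup.mk_pow, hy, QuotientGroup.mk_one]

theorem Subgroup.sup_sylow_eq_of_relIndex_eq_pow [Fact p.Prime] {A B : Subgroup X} (S : Sylow p X)
    [(S : Subgroup X).FiniteIndex] (hAB : A ≤ B) (hSB : (S : Subgroup X) ≤ B) {n : ℕ}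
    (hA : A.relIndex B = p ^ n) : A ⊔ S = B := by
  have hdvd : (A ⊔ S).relIndex B ∣ p ^ n := hA ▸ relIndex_dvd_of_le_left B le_sup_left
  have hndvd : ¬ p ∣ (A ⊔ S).relIndex B := fun h => S.not_dvd_index <|
    h.trans ((relIndex_dvd_index_of_le (sup_le hAB hSB)).trans (index_dvd_of_le le_sup_right))
  have hone : (A ⊔ S).relIndex B = 1 :=
    Nat.Coprime.eq_one_of_dvd
      (Nat.Coprime.pow_right n ((Fact.out : p.Prime).coprime_iff_not_dvd.2 hndvd).symm) hdvd
  exact le_antisymm (sup_le hAB hSB) (relIndex_eq_one.1 hone)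

end PrimePowerElements

section SylowIntersections

variable {p : ℕ} {H : Type*} [Group H]

theorem mul_pow_mul_inv_pow_mem {V : Subgroup H} {x r : H} (hx : x ∈ V)
    (hr : r ∈ normalizer (V : Set H)) (n : ℕ) : (x * r) ^ n * (r ^ n)⁻¹ ∈ V := by
  induction n with
  | zero => simp
  | succ n ih =>
    have hconj : r ^ n * x * (r ^ n)⁻¹ ∈ V := (mem_normalizer_iff.1 (pow_mem hr n) x).1 hx
    convert mul_mem ih hconj using 1
    simp only [pow_succ, mul_inv_rev, mul_assoc, mul_inv_cancel_left, inv_mul_cancel_left]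

variable {N : Subgroup H}

theorem isPGroup_normalizer_of_not_le (hN : ∀ h ∉ N, ∃ k, h ^ p ^ k = 1) {V : Subgroup H}
    (hV : IsPGroup p V) (hVN : ¬ V ≤ N) : IsPGroup p (normalizer (V : Set H)) := by
  rw [Subgroup.isPGroup_iff] at hV ⊢
  intro r hr
  by_cases hrN : r ∈ N
  · obtain ⟨x, hxV, hxN⟩ := SetLike.not_le_iff_exists.1 hVN
    obtain ⟨k, hk⟩ := hN (x * r) fun h => hxN (by simpa using mul_mem h (inv_mem hrN))
    have hrk : r ^ p ^ k ∈ V := by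
      simpa [hk] using mul_pow_mul_inv_pow_mem hxV hr (p ^ k)
    obtain ⟨j, hj⟩ := hV _ hrk
    exact ⟨k + j, by rw [pow_add, pow_mul, hj]⟩
  · exact hN r hrN

variable [Finite H] [Fact p.Prime]

theorem IsPGroup.lt_inf_normalizer {P D : Subgroup H} (hP : IsPGroup p P) (hDP : D < P) :
    D < P ⊓ normalizer (D : Set H) := by
  have : Group.IsNilpotent P := hP.isNilpotent
  have hlt : D.subgroupOf P < (normalizer (D : Set H)).subgroupOf P := by
    rw [subgroupOf_normalizer_eq hDP.le]
    exact Group.normalizerCondition_of_isNilpotent _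
      (lt_top_iff_ne_top.2 fun h => hDP.not_ge (subgroupOf_eq_top.1 h))
  have := map_subtype_lt_map_subtype.2 hlt
  rwa [subgroupOf_map_subtype, subgroupOf_map_subtype, inf_eq_left.2 hDP.le, inf_comm] at this

theorem Sylow.inf_le_of_ne (hN : ∀ h ∉ N, ∃ k, h ^ p ^ k = 1) {P R : Sylow p H} (hPR : P ≠ R) :
    (P : Subgroup H) ⊓ R ≤ N := by
  suffices key : ∀ D : Subgroup H, ∀ P R : Sylow p H, (P : Subgroup H) ⊓ R = D → ¬ D ≤ N → P = R
    from not_not.1 (mt (key _ P R rfl) hPR)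
  intro D
  induction D using WellFoundedGT.induction with
  | _ D ih =>
  intro P R hD hDN
  by_contra hPR
  obtain ⟨S, hS⟩ :=
    (isPGroup_normalizer_of_not_le hN (P.isPGroup'.to_le (hD ▸ inf_le_left)) hDN).exists_le_sylow
  have eq_S : ∀ T : Sylow p H, D < T → S = T := fun T hT => by
    have hlt : D < (S : Subgroup H) ⊓ T :=
      (T.isPGroup'.lt_inf_normalizer hT).trans_le (le_inf (inf_le_right.trans hS) inf_le_left)
    exact ih _ hlt S T rfl fun h => hDN (hlt.le.trans h)
  have hDP : D < P := hD ▸ lt_of_le_of_ne inf_le_left fun h =>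
    hPR (Sylow.ext (P.3 R.isPGroup' (inf_eq_left.1 h)).symm)
  have hDR : D < R := hD ▸ lt_of_le_of_ne inf_le_right fun h =>
    hPR (Sylow.ext (R.3 P.isPGroup' (inf_eq_right.1 h)))
  exact hPR ((eq_S P hDP).symm.trans (eq_S R hDR))

theorem Sylow.inf_map_conj_le (hN : ∀ h ∉ N, ∃ k, h ^ p ^ k = 1) (P : Sylow p H) {g : H}
    (hg : g ∉ (P : Subgroup H)) :
    (P : Subgroup H) ⊓ (P : Subgroup H).map (MulAut.conj g).toMonoidHom ≤ N := by
  by_cases hPN : (P : Subgroup H) ≤ N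
  · exact inf_le_left.trans hPN
  have hnorm : normalizer ((P : Subgroup H) : Set H) = P :=
    P.3 (isPGroup_normalizer_of_not_le hN P.isPGroup' hPN) le_normalizer
  have hne : P ≠ g • P := fun h => hg (hnorm ▸ Sylow.smul_eq_iff_mem_normalizer.1 h.symm)
  have := Sylow.inf_le_of_ne hN hne
  rwa [Sylow.coe_subgroup_smul, Subgroup.pointwise_smul_def] at this

theorem isFWTriple_sylow_inf [N.Normal] (hN : ∀ h ∉ N, ∃ k, h ^ p ^ k = 1) (P : Sylow p H)
    (hPN : ¬ (P : Subgroup H) ≤ N) (hP : (P : Subgroup H) ≠ ⊤) :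
    IsFWTriple (P : Subgroup H) ((P : Subgroup H) ⊓ N) :=
  ⟨inf_le_left, by rw [inf_subgroupOf_left]; infer_instance,
    lt_of_le_of_ne inf_le_left fun h => hPN (inf_eq_left.1 h), lt_top_iff_ne_top.2 hP,
    fun _ hg => le_inf inf_le_left (P.inf_map_conj_le hN hg)⟩

end SylowIntersections

theorem isFWTriple_sylow_subgroupOf {q : ℕ} {G : Type*} [Group G] [Finite G] [Fact q.Prime]
    {N M : Subgroup G} [N.Normal] (hM : ∀ g ∈ M, g ∉ N → ∃ k, g ^ q ^ k = 1) (Q : Sylow q G)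
    (hQM : (Q : Subgroup G) ≤ M) (hQN : ¬ (Q : Subgroup G) ≤ N) (hMQ : ¬ M ≤ Q) :
    IsFWTriple ((Q : Subgroup G).subgroupOf M) (((Q : Subgroup G) ⊓ N).subgroupOf M) := by
  have hM' : ∀ h : M, h ∉ N.subgroupOf M → ∃ k, h ^ q ^ k = 1 := fun h hh =>
    (hM h h.2 hh).imp fun _ hk => Subtype.ext (by simpa using hk)
  have := isFWTriple_sylow_inf hM' (Q.subtype hQM)
    (fun h => hQN fun y hy => h (show (⟨y, hQM hy⟩ : M) ∈ (Q : Subgroup G).subgroupOf M from hy))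
    (fun h => hMQ (subgroupOf_eq_top.1 h))
  have hinf : ((Q : Subgroup G) ⊓ N).subgroupOf M =
      (Q : Subgroup G).subgroupOf M ⊓ N.subgroupOf M :=
    comap_inf _ _ _
  rwa [Sylow.coe_subtype, ← hinf] at this

section FrobeniusQuotient

variable {G : Type*} [Group G] {N : Subgroup G} [N.Normal] {p q : ℕ}

theorem pow_prime_pow_eq_one_of_notMem_comap [Fact p.Prime] [Fact q.Prime] (hpq : p ≠ q)
    (hppo : ∀ g : G, g ∉ N → ∃ r k : ℕ, r.Prime ∧ orderOf g = r ^ k)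
    (honly : ∀ r : ℕ, r.Prime → (∃ g : G, g ∉ N ∧ r ∣ orderOf g) → r = p ∨ r = q)
    {K C : Subgroup (G ⧸ N)} [K.Normal] (hKC : K ⊔ C = ⊤) (hC : IsPGroup p C) :
    ∀ g ∉ K.comap (QuotientGroup.mk' N), ∃ k, g ^ p ^ k = 1 := by
  intro g hgK
  have hgN : g ∉ N := fun h => hgK (QuotientGroup.le_comap_mk' N K h)
  obtain ⟨r, k, hr, hord⟩ := hppo g hgN
  have hk : k ≠ 0 := by rintro rfl; exact hgK (orderOf_eq_one_iff.1 hord ▸ one_mem _)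
  rcases honly r hr ⟨g, hgN, hord ▸ dvd_pow_self r hk⟩ with hrp | hrq
  · exact ⟨k, hrp ▸ hord ▸ pow_orderOf_eq_one g⟩
  · refine absurd (mem_of_sup_eq_top_of_pow_eq_one hpq hKC hC (y := (g : G ⧸ N)) (j := k) ?_) hgK
    rw [← QuotientGroup.mk_pow, ← hrq, ← hord, pow_orderOf_eq_one, QuotientGroup.mk_one]

theorem pow_prime_pow_eq_one_of_mem_comap [Fact q.Prime]
    (hppo : ∀ g : G, g ∉ N → ∃ r k : ℕ, r.Prime ∧ orderOf g = r ^ k)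
    {K : Subgroup (G ⧸ N)} (hK : IsPGroup q K) :
    ∀ g ∈ K.comap (QuotientGroup.mk' N), g ∉ N → ∃ k, g ^ q ^ k = 1 := by
  intro g hgK hgN
  obtain ⟨r, k, hr, hord⟩ := hppo g hgN
  obtain ⟨s, hs⟩ := Subgroup.isPGroup_iff.1 hK (g : G ⧸ N) hgK
  obtain rfl : r = q := by_contra fun hrq => hgN <| (QuotientGroup.eq_one_iff g).1 <|
    eq_one_of_pow_prime_pow_eq_one hr Fact.out hrq (x := (g : G ⧸ N)) (a := k)
      (by rw [← QuotientGroup.mk_pow, ← hord, pow_orderOf_eq_one, QuotientGroup.mk_one]) hs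
  exact ⟨k, hord ▸ pow_orderOf_eq_one g⟩

end FrobeniusQuotient

theorem stmt_15_general {G : Type*} [Group G] [Fintype G] (N : Subgroup G) [N.Normal]
    {p q : ℕ} [Fact p.Prime] [Fact q.Prime] (hpq : p ≠ q)
    (hppo : ∀ g : G, g ∉ N → ∃ r k : ℕ, r.Prime ∧ orderOf g = r ^ k)
    (hqd : ∃ g : G, g ∉ N ∧ q ∣ orderOf g)
    (honly : ∀ r : ℕ, r.Prime → (∃ g : G, g ∉ N ∧ r ∣ orderOf g) → r = p ∨ r = q)
    (hfrob : ∃ K C : Subgroup (G ⧸ N), K.Normal ∧ ⊥ < K ∧ K < ⊤ ∧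
      (∀ x : G ⧸ N, x ∉ C → C ⊓ C.map (MulAut.conj x).toMonoidHom = ⊥) ∧
      K ⊔ C = ⊤ ∧ K ⊓ C = ⊥ ∧ IsPGroup q ↥K ∧ IsPGroup p ↥C) :
    ∃ M : Subgroup G, M.Normal ∧ N ≤ M ∧
      ∃ (P : Sylow p G) (Q : Sylow q G),
        N ⊔ (Q : Subgroup G) = M ∧ M ⊔ (P : Subgroup G) = ⊤ ∧
        IsFWTriple (P : Subgroup G) ((P : Subgroup G) ⊓ M) ∧
        (M = Q ∨ IsFWTriple ((Q : Subgroup G).subgroupOf M)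
          (((Q : Subgroup G) ⊓ N).subgroupOf M)) := by
  obtain ⟨K, C, hKn, hKbot, hKtop, -, hKC, -, hKq, hCp⟩ := hfrob
  have hπ := QuotientGroup.mk'_surjective N
  set M := K.comap (QuotientGroup.mk' N)
  have hNM : N ≤ M := QuotientGroup.le_comap_mk' N K
  have hout := pow_prime_pow_eq_one_of_notMem_comap hpq hppo honly hKC hCp
  obtain ⟨P⟩ : Nonempty (Sylow p G) := inferInstance
  obtain ⟨Q⟩ : Nonempty (Sylow q G) := inferInstance
  have hQM : (Q : Subgroup G) ≤ M := Q.isPGroup'.le_of_forall_notMem_pow_eq_one hpq hout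
  have hNQ : N ⊔ (Q : Subgroup G) = M := by
    obtain ⟨n, hn⟩ := hKq.exists_card_eq
    refine sup_sylow_eq_of_relIndex_eq_pow Q hNM hQM (n := n) ?_
    rw [← hn, ← map_comap_eq_self_of_surjective hπ K, ← relIndex_ker, QuotientGroup.ker_mk']
  have hMP : M ⊔ (P : Subgroup G) = ⊤ := by
    obtain ⟨n, hn⟩ := (IsPGroup.quotient_of_forall_notMem hout).exists_card_eq
    exact sup_sylow_eq_of_relIndex_eq_pow P le_top le_top (by rw [relIndex_top_right, index, hn])
  have hPM : ¬ (P : Subgroup G) ≤ M := fun h => hKtop.ne <| comap_injective hπ <| by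
    rw [comap_top, ← hMP, sup_eq_left.2 h]
  obtain ⟨g, -, hqg⟩ := hqd
  refine ⟨M, hKn.comap _, hNM, P, Q, hNQ, hMP, isFWTriple_sylow_inf hout P hPM
    (P.isPGroup'.ne_top_of_dvd_orderOf hpq hqg), ?_⟩
  by_cases hNQ' : N ≤ Q
  · exact Or.inl (by rw [← hNQ, sup_eq_right.2 hNQ'])
  have hQN : ¬ (Q : Subgroup G) ≤ N := fun h => hKbot.ne' <| comap_injective hπ <| by
    rw [MonoidHom.comap_bot, QuotientGroup.ker_mk']
    exact hNQ.symm.trans (sup_eq_left.2 h)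
  exact Or.inr <| isFWTriple_sylow_subgroupOf (pow_prime_pow_eq_one_of_mem_comap hppo hKq) Q
    hQM hQN fun h => hNQ' (hNM.trans h)

theorem stmt_15 {G : Type*} [Group G] [Fintype G] (N : Subgroup G) [N.Normal]
    (hsolv : IsSolvable (G ⧸ N))
    {p q : ℕ} [Fact p.Prime] [Fact q.Prime] (hpq : p ≠ q)
    (hppo : ∀ g : G, g ∉ N → ∃ r k : ℕ, r.Prime ∧ orderOf g = r ^ k)
    (hpd : ∃ g : G, g ∉ N ∧ p ∣ orderOf g)
    (hqd : ∃ g : G, g ∉ N ∧ q ∣ orderOf g)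
    (honly : ∀ r : ℕ, r.Prime → (∃ g : G, g ∉ N ∧ r ∣ orderOf g) → r = p ∨ r = q)
    (hfrob : ∃ K C : Subgroup (G ⧸ N), K.Normal ∧ ⊥ < K ∧ K < ⊤ ∧
      (∀ x : G ⧸ N, x ∉ C → C ⊓ C.map (MulAut.conj x).toMonoidHom = ⊥) ∧
      K ⊔ C = ⊤ ∧ K ⊓ C = ⊥ ∧ IsPGroup q ↥K ∧ IsPGroup p ↥C) :
    ∃ M : Subgroup G, M.Normal ∧ N ≤ M ∧
      ∃ (P : Sylow p G) (Q : Sylow q G),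
        N ⊔ (Q : Subgroup G) = M ∧ M ⊔ (P : Subgroup G) = ⊤ ∧
        IsFWTriple (P : Subgroup G) ((P : Subgroup G) ⊓ M) ∧
        (M = Q ∨ IsFWTriple ((Q : Subgroup G).subgroupOf M)
          (((Q : Subgroup G) ⊓ N).subgroupOf M)) :=
  stmt_15_general N hpq hppo hqd honly hfrob
end

section
/- Let G be a finite group with normal subgroups N ≤ M, primes p ≠ q, P ∈ Syl_p(G), Q ∈ Syl_q(G), G = MP, M = NQ, with (G, P, P ∩ M) and (M, Q, Q ∩ N) Frobenius-Wielandt triples. If P is chosen so that N_P(Q) = P ∩ N_G(Q) is a Sylow p-subgroup of N_G(Q), then N_P(Q) is a Frobenius complement of the Frobenius group N_G(Q) and P = (N ∩ P) ⋊ N_P(Q) (internal semidirect product: P = (N ∩ P)·N_P(Q) with trivial intersection and N ∩ P normal in P). -/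
open Subgroup

/-! Since `(M, Q, Q ∩ N)` is a Frobenius–Wielandt triple, `Q` is self-normalizing in `M`, so
`M ∩ N_G(Q) ≤ Q` and the `p`-group `B = P ∩ N_G(Q)` meets `M` trivially. By the Frattini
argument `N · N_G(Q) = G`, so a Sylow `p`-subgroup of `N_G(Q)`, such as `B`, maps isomorphically
onto a Sylow `p`-subgroup of `G/N`; hence `|B| = |P : N ∩ P|` and `P = (N ∩ P) ⋊ B`. Finally,
for `x ∈ N_G(Q) \ B` the triple `(G, P, P ∩ M)` gives `B ∩ B^x ≤ M ∩ N_G(Q) ∩ P ≤ Q ∩ P = 1`. -/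

namespace IsFWTriple

variable {X : Type*} [Group X] {H L : Subgroup X}

theorem bot_lt (h : IsFWTriple H L) : ⊥ < H :=
  bot_le.trans_lt h.2.2.1

theorem normalizer_le (h : IsFWTriple H L) : normalizer (H : Set X) ≤ H := by
  intro x hx
  by_contra hxH
  have hconj : H.map (MulAut.conj x).toMonoidHom = H := mem_normalizer_iff_map_conj_eq.mp hx
  have hHL := h.2.2.2.2 x hxH
  rw [hconj, inf_idem] at hHL
  exact h.2.2.1.not_ge hHL

theorem inf_normalizer_le {M Q : Subgroup X} {L : Subgroup M} (h : IsFWTriple (Q.subgroupOf M) L) :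
    M ⊓ normalizer (Q : Set X) ≤ Q := by
  rintro x ⟨hxM, hxQ⟩
  exact mem_subgroupOf.mp (h.normalizer_le (le_normalizer_comap M.subtype (x := ⟨x, hxM⟩) hxQ))

theorem isFrobeniusComplementIn_inf_subgroupOf {R : Subgroup X} (h : IsFWTriple H L)
    (hLR : L ⊓ R = ⊥) (hHR : H ⊓ R ≠ ⊥) (hRH : ¬ R ≤ H) :
    IsFrobeniusComplementIn ((H ⊓ R).subgroupOf R) := by
  refine ⟨bot_lt_iff_ne_bot.mpr ?_, lt_top_iff_ne_top.mpr ?_, ?_⟩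
  · rw [Ne, subgroupOf_eq_bot, disjoint_iff, inf_assoc, inf_idem]
    exact hHR
  · rw [Ne, subgroupOf_eq_top]
    exact fun hR => hRH (hR.trans inf_le_left)
  · intro x hx
    rw [eq_bot_iff]
    rintro g ⟨hgC, y, hyC, rfl⟩
    have hxH : (x : X) ∉ H := fun hxH => hx (mem_subgroupOf.mpr ⟨hxH, x.2⟩)
    have hgL : (x * y * x⁻¹ : X) ∈ L :=
      h.2.2.2.2 x hxH ⟨(mem_subgroupOf.mp hgC).1, y, (mem_subgroupOf.mp hyC).1, rfl⟩
    have hg : (x * y * x⁻¹ : X) ∈ L ⊓ R := ⟨hgL, (x * y * x⁻¹).2⟩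
    rw [hLR] at hg
    exact Subtype.ext hg

end IsFWTriple

namespace Subgroup

variable {G : Type*} [Group G]

theorem relIndex_eq_card_of_inf_eq_bot {H K : Subgroup G} (h : H ⊓ K = ⊥) :
    H.relIndex K = Nat.card K := by
  rw [← inf_relIndex_right, h, relIndex_bot_left]

theorem sup_eq_of_card_eq_relIndex [Finite G] {A B P : Subgroup G} (hA : A ≤ P) (hB : B ≤ P)
    (hAB : A ⊓ B = ⊥) (hcard : Nat.card B = A.relIndex P) : A ⊔ B = P := by
  have hAP : A.relIndex P ≠ 0 := index_ne_zero_of_finite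
  have hsup : A.relIndex (A ⊔ B) = A.relIndex P := by
    refine le_antisymm (relIndex_le_of_le_right (sup_le hA hB) hAP) ?_
    calc A.relIndex P = A.relIndex B := by rw [relIndex_eq_card_of_inf_eq_bot hAB, hcard]
      _ ≤ A.relIndex (A ⊔ B) := relIndex_le_of_le_right le_sup_right index_ne_zero_of_finite
  have hmul := relIndex_mul_relIndex A (A ⊔ B) P le_sup_left (sup_le hA hB)
  rw [hsup, Nat.mul_eq_left hAP, relIndex_eq_one] at hmul
  exact le_antisymm (sup_le hA hB) hmul

end Subgroup

theorem QuotientGroup.mk'_comp_subtype_surjective {G : Type*} [Group G] {N R : Subgroup G}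
    [N.Normal] (hNR : N ⊔ R = ⊤) : Function.Surjective ((mk' N).comp R.subtype) := by
  have hmk := mk'_surjective N
  have hcomap := comap_map_eq (mk' N) R
  rw [ker_mk', sup_comm, hNR] at hcomap
  rw [← MonoidHom.range_eq_top, MonoidHom.range_comp, range_subtype,
    ← map_comap_eq_self_of_surjective hmk (R.map _), hcomap, map_top_of_surjective _ hmk]

/-- Both sides are the order of a Sylow `p`-subgroup of `G ⧸ N`, since `R` maps onto `G ⧸ N`. -/
theorem Sylow.relIndex_map_subtype_eq {G : Type*} [Group G] [Finite G] {p : ℕ} [Fact p.Prime]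
    {N R : Subgroup G} [N.Normal] (hNR : N ⊔ R = ⊤) (P : Sylow p G) (S : Sylow p R) :
    N.relIndex ((S : Subgroup R).map R.subtype) = N.relIndex P := by
  rw [← QuotientGroup.ker_mk' N, relIndex_ker, relIndex_ker, map_map,
    ← coe_mapSurjective (QuotientGroup.mk'_comp_subtype_surjective hNR),
    ← coe_mapSurjective (QuotientGroup.mk'_surjective N),
    card_eq_multiplicity, card_eq_multiplicity]

theorem Sylow.sup_normalizer_eq_top_of_normal {G : Type*} [Group G] [Finite G] {p : ℕ}
    [Fact p.Prime] {N : Subgroup G} (P : Sylow p G) (hNP : (N ⊔ P).Normal) :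
    N ⊔ normalizer ((P : Subgroup G) : Set G) = ⊤ := by
  calc N ⊔ normalizer ((P : Subgroup G) : Set G)
        = N ⊔ P ⊔ normalizer ((P : Subgroup G) : Set G) := by
          rw [sup_assoc, sup_eq_right.mpr le_normalizer]
    _ = ⊤ := by rw [sup_comm]; exact P.normalizer_sup_eq_top' le_sup_right

theorem stmt_18_general {G : Type*} [Group G] [Fintype G] (N M : Subgroup G)
    [N.Normal] [M.Normal] (hNM : N ≤ M)
    {p q : ℕ} [Fact p.Prime] [Fact q.Prime] (hpq : p ≠ q)
    (P : Sylow p G) (Q : Sylow q G)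
    (hM : N ⊔ (Q : Subgroup G) = M)
    (h1 : IsFWTriple (P : Subgroup G) ((P : Subgroup G) ⊓ M))
    (h2 : IsFWTriple ((Q : Subgroup G).subgroupOf M)
      (((Q : Subgroup G) ⊓ N).subgroupOf M))
    (hchoice : ∃ S : Sylow p ↥((Subgroup.normalizer ((Q : Subgroup G) : Set G))),
      (S : Subgroup ↥((Subgroup.normalizer ((Q : Subgroup G) : Set G)))).map
          ((Subgroup.normalizer ((Q : Subgroup G) : Set G)).subtype) =
        (P : Subgroup G) ⊓ (Subgroup.normalizer ((Q : Subgroup G) : Set G))) :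
    IsFrobeniusGroup ↥((Subgroup.normalizer ((Q : Subgroup G) : Set G))) ∧
    IsFrobeniusComplementIn
      (((P : Subgroup G) ⊓ (Subgroup.normalizer ((Q : Subgroup G) : Set G))).subgroupOf
        (Subgroup.normalizer ((Q : Subgroup G) : Set G))) ∧
    ((N ⊓ (P : Subgroup G)).subgroupOf (P : Subgroup G)).Normal ∧
    (N ⊓ (P : Subgroup G)) ⊔ ((P : Subgroup G) ⊓ (Subgroup.normalizer ((Q : Subgroup G) : Set G))) =
      (P : Subgroup G) ∧
    (N ⊓ (P : Subgroup G)) ⊓ ((P : Subgroup G) ⊓ (Subgroup.normalizer ((Q : Subgroup G) : Set G))) = ⊥ := by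
  set R := normalizer ((Q : Subgroup G) : Set G)
  obtain ⟨S, hS⟩ := hchoice
  have hPQ : (P : Subgroup G) ⊓ Q = ⊥ :=
    disjoint_iff.mp (IsPGroup.disjoint_of_ne p q hpq _ _ P.isPGroup' Q.isPGroup')
  have hPMR : (P : Subgroup G) ⊓ (M ⊓ R) = ⊥ :=
    eq_bot_iff.mpr (hPQ ▸ inf_le_inf_left _ h2.inf_normalizer_le)
  have hNR : N ⊔ R = ⊤ := Q.sup_normalizer_eq_top_of_normal (hM ▸ inferInstance)
  have hNB : N ⊓ (P ⊓ R) = ⊥ :=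
    eq_bot_iff.mpr (hPMR ▸ fun x ⟨hxN, hxP, hxR⟩ => ⟨hxP, hNM hxN, hxR⟩)
  have hAB : N ⊓ P ⊓ (P ⊓ R) = ⊥ := by rw [inf_assoc, inf_left_idem, hNB]
  have hsup : N ⊓ P ⊔ (P ⊓ R) = P := by
    refine sup_eq_of_card_eq_relIndex inf_le_right inf_le_left hAB ?_
    calc Nat.card ↥((P : Subgroup G) ⊓ R) = N.relIndex (P ⊓ R) :=
          (relIndex_eq_card_of_inf_eq_bot hNB).symm
      _ = N.relIndex P := by rw [← hS]; exact Sylow.relIndex_map_subtype_eq hNR P S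
      _ = (N ⊓ P).relIndex P := (inf_relIndex_right N P).symm
  have hB : (P : Subgroup G) ⊓ R ≠ ⊥ := by
    intro hB
    rw [hB, sup_bot_eq, inf_eq_right] at hsup
    exact h1.2.2.1.ne (inf_eq_left.mpr (hsup.trans hNM))
  have hQ : (Q : Subgroup G) ≠ ⊥ := fun hQ => h2.bot_lt.ne' (by rw [hQ, bot_subgroupOf])
  have hRP : ¬ R ≤ P := fun hRP =>
    hQ (by rw [← hPQ, inf_eq_right.mpr (le_normalizer.trans hRP)])
  have hC := h1.isFrobeniusComplementIn_inf_subgroupOf (by rwa [inf_assoc]) hB hRP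
  refine ⟨⟨_, hC⟩, hC, ?_, hsup, hAB⟩
  rw [inf_subgroupOf_right]
  infer_instance

theorem stmt_18 {G : Type*} [Group G] [Fintype G] (N M : Subgroup G)
    [N.Normal] [M.Normal] (hNM : N ≤ M)
    {p q : ℕ} [Fact p.Prime] [Fact q.Prime] (hpq : p ≠ q)
    (P : Sylow p G) (Q : Sylow q G)
    (hG : M ⊔ (P : Subgroup G) = ⊤) (hM : N ⊔ (Q : Subgroup G) = M)
    (h1 : IsFWTriple (P : Subgroup G) ((P : Subgroup G) ⊓ M))
    (h2 : IsFWTriple ((Q : Subgroup G).subgroupOf M)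
      (((Q : Subgroup G) ⊓ N).subgroupOf M))
    (hchoice : ∃ S : Sylow p ↥((Subgroup.normalizer ((Q : Subgroup G) : Set G))),
      (S : Subgroup ↥((Subgroup.normalizer ((Q : Subgroup G) : Set G)))).map
          ((Subgroup.normalizer ((Q : Subgroup G) : Set G)).subtype) =
        (P : Subgroup G) ⊓ (Subgroup.normalizer ((Q : Subgroup G) : Set G))) :
    IsFrobeniusGroup ↥((Subgroup.normalizer ((Q : Subgroup G) : Set G))) ∧
    IsFrobeniusComplementIn
      (((P : Subgroup G) ⊓ (Subgroup.normalizer ((Q : Subgroup G) : Set G))).subgroupOf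
        (Subgroup.normalizer ((Q : Subgroup G) : Set G))) ∧
    ((N ⊓ (P : Subgroup G)).subgroupOf (P : Subgroup G)).Normal ∧
    (N ⊓ (P : Subgroup G)) ⊔ ((P : Subgroup G) ⊓ (Subgroup.normalizer ((Q : Subgroup G) : Set G))) =
      (P : Subgroup G) ∧
    (N ⊓ (P : Subgroup G)) ⊓ ((P : Subgroup G) ⊓ (Subgroup.normalizer ((Q : Subgroup G) : Set G))) = ⊥ :=
  stmt_18_general N M hNM hpq P Q hM h1 h2 hchoice
end

section
/- Let G be a finite group with normal subgroups N ≤ M, primes p ≠ q, P ∈ Syl_p(G), Q ∈ Syl_q(G), G = MP, M = NQ, with (G, P, P ∩ M) and (M, Q, Q ∩ N) Frobenius-Wielandt triples. Then either N_G(Q ∩ N) = N_G(Q), or N_G(Q ∩ N)/(Q ∩ N) is a 2-Frobenius group. -/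
open Subgroup
open scoped Pointwise

lemma aux_mem_map_mk'_iff {H : Type*} [Group H] (D A : Subgroup H) [D.Normal] (hDA : D ≤ A)
    (x : H) : QuotientGroup.mk' D x ∈ A.map (QuotientGroup.mk' D) ↔ x ∈ A := by
  constructor
  · rintro ⟨a, ha, h⟩
    obtain ⟨z, hz, hz2⟩ := (QuotientGroup.mk'_eq_mk' D).mp h
    rw [← hz2]; exact mul_mem ha (hDA hz)
  · exact fun h => ⟨x, h, rfl⟩

lemma aux_pow_in_pgroup {p : ℕ} {G : Type*} [Group G] {A : Subgroup G} (hA : IsPGroup p A)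
    {x : G} (hx : x ∈ A) : ∃ k, x ^ p ^ k = 1 := by
  obtain ⟨k, hk⟩ := hA ⟨x, hx⟩
  exact ⟨k, by simpa [Subtype.ext_iff] using hk⟩

set_option maxHeartbeats 2000000

theorem stmt_19 {G : Type*} [Group G] [Fintype G] (N M : Subgroup G)
    [N.Normal] [M.Normal] (hNM : N ≤ M)
    {p q : ℕ} [Fact p.Prime] [Fact q.Prime] (hpq : p ≠ q)
    (P : Sylow p G) (Q : Sylow q G)
    (hG : M ⊔ (P : Subgroup G) = ⊤) (hM : N ⊔ (Q : Subgroup G) = M)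
    (h1 : IsFWTriple (P : Subgroup G) ((P : Subgroup G) ⊓ M))
    (h2 : IsFWTriple ((Q : Subgroup G).subgroupOf M)
      (((Q : Subgroup G) ⊓ N).subgroupOf M)) :
    Subgroup.normalizer (((Q : Subgroup G) ⊓ N : Subgroup G) : Set G) =
      Subgroup.normalizer ((Q : Subgroup G) : Set G) ∨
    Is2FrobeniusGroup
      (↥(Subgroup.normalizer (((Q : Subgroup G) ⊓ N : Subgroup G) : Set G)) ⧸
        (((Q : Subgroup G) ⊓ N).subgroupOf
          (Subgroup.normalizer (((Q : Subgroup G) ⊓ N : Subgroup G) : Set G)))) := by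
  classical
  set Qg : Subgroup G := (Q : Subgroup G) with hQg
  set D : Subgroup G := Qg ⊓ N with hD
  set Hn : Subgroup G := Subgroup.normalizer (D : Set G) with hHn
  have hQM : Qg ≤ M := hM ▸ le_sup_right
  have hDQ : D ≤ Qg := inf_le_left
  have hDN : D ≤ N := inf_le_right
  -- Q normalizes D
  have hQH : Qg ≤ Hn := by
    intro x hx
    rw [hHn, mem_normalizer_iff]
    intro h
    constructor
    · rintro ⟨h1', h2'⟩
      exact ⟨Qg.mul_mem (Qg.mul_mem hx h1') (Qg.inv_mem hx),
        Subgroup.Normal.conj_mem ‹N.Normal› h h2' x⟩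
    · rintro ⟨h1', h2'⟩
      have : x⁻¹ * (x * h * x⁻¹) * x ∈ Qg ⊓ N := by
        refine ⟨?_, ?_⟩
        · have := Qg.mul_mem (Qg.mul_mem (Qg.inv_mem hx) h1') hx
          simpa [mul_assoc] using this
        · have := Subgroup.Normal.conj_mem ‹N.Normal› _ h2' x⁻¹
          simpa [mul_assoc] using this
      simpa [mul_assoc, hD] using this
  -- N_G(Q) ≤ Hn
  have hNQH : Subgroup.normalizer (Qg : Set G) ≤ Hn := by
    intro g hg
    rw [hHn, mem_normalizer_iff]
    rw [mem_normalizer_iff] at hg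
    intro h
    constructor
    · rintro ⟨h1', h2'⟩
      exact ⟨(hg h).mp h1', Subgroup.Normal.conj_mem ‹N.Normal› h h2' g⟩
    · rintro ⟨h1', h2'⟩
      refine ⟨(hg h).mpr h1', ?_⟩
      have := Subgroup.Normal.conj_mem ‹N.Normal› _ h2' g⁻¹
      simpa [mul_assoc] using this
  -- D < Q
  have hDltQ : D < Qg := by
    refine lt_of_le_of_ne hDQ (fun hEq => ?_)
    have h21 := h2.2.2.1
    rw [hEq] at h21
    exact lt_irrefl _ h21
  obtain ⟨x₁, hx₁Q, hx₁D⟩ := SetLike.exists_of_lt hDltQ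
  have hx₁N : x₁ ∉ N := fun h => hx₁D ⟨hx₁Q, h⟩
  -- translated FW condition for Q inside M
  have hFW2 : ∀ m ∈ M, m ∉ Qg → ∀ x ∈ Qg, m⁻¹ * x * m ∈ Qg → x ∈ D := by
    intro m hmM hmQ x hx hconj
    have hg : (⟨m, hmM⟩ : M) ∉ Qg.subgroupOf M := by
      simpa [Subgroup.mem_subgroupOf] using hmQ
    have key := h2.2.2.2.2 ⟨m, hmM⟩ hg
    have hxM : x ∈ M := hQM hx
    have hmem : (⟨x, hxM⟩ : M) ∈ Qg.subgroupOf M ⊓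
        (Qg.subgroupOf M).map (MulAut.conj (⟨m, hmM⟩ : M)).toMonoidHom := by
      refine ⟨by simpa [Subgroup.mem_subgroupOf] using hx, ?_⟩
      refine ⟨⟨m⁻¹ * x * m, M.mul_mem (M.mul_mem (M.inv_mem hmM) hxM) hmM⟩, ?_, ?_⟩
      · simpa [Subgroup.mem_subgroupOf] using hconj
      · ext
        simp [MulAut.conj_apply]
        group
    have := key hmem
    simpa [Subgroup.mem_subgroupOf, hD] using this
  -- translated FW condition for P: base form
  have hFW1 : ∀ g x : G, x ∈ (P : Subgroup G) → g⁻¹ * x * g ∈ (P : Subgroup G) → x ∉ M →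
      g ∈ (P : Subgroup G) := by
    intro g x hx hconj hxM
    by_contra hg
    have key := h1.2.2.2.2 g hg
    have : x ∈ (P : Subgroup G) ⊓ (P : Subgroup G).map (MulAut.conj g).toMonoidHom := by
      refine ⟨hx, ⟨g⁻¹ * x * g, hconj, ?_⟩⟩
      simp [MulAut.conj_apply]
      group
    exact hxM (key this).2
  -- L1: version for arbitrary Sylow p-subgroups
  have hL1 : ∀ (P₀ : Sylow p G) (c x : G), x ∈ (P₀ : Subgroup G) →
      c⁻¹ * x * c ∈ (P₀ : Subgroup G) → x ∉ M → c ∈ (P₀ : Subgroup G) := by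
    intro P₀ c x hx hconj hxM
    obtain ⟨g₀, hg₀⟩ := MulAction.exists_smul_eq G P P₀
    have hmemP₀ : ∀ y : G, y ∈ (P₀ : Subgroup G) ↔ g₀⁻¹ * y * g₀ ∈ (P : Subgroup G) := by
      intro y
      rw [← hg₀, Sylow.coe_subgroup_smul, Subgroup.mem_pointwise_smul_iff_inv_smul_mem]
      simp [MulAut.smul_def, mul_assoc]
    have hy : g₀⁻¹ * x * g₀ ∈ (P : Subgroup G) := (hmemP₀ x).mp hx
    have hyM : g₀⁻¹ * x * g₀ ∉ M := by
      intro h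
      apply hxM
      have := Subgroup.Normal.conj_mem ‹M.Normal› _ h g₀
      simpa [mul_assoc] using this
    have hgP : g₀⁻¹ * c * g₀ ∈ (P : Subgroup G) := by
      apply hFW1 (g₀⁻¹ * c * g₀) (g₀⁻¹ * x * g₀) hy _ hyM
      have := (hmemP₀ (c⁻¹ * x * c)).mp hconj
      have heq : (g₀⁻¹ * c * g₀)⁻¹ * (g₀⁻¹ * x * g₀) * (g₀⁻¹ * c * g₀) =
          g₀⁻¹ * (c⁻¹ * x * c) * g₀ := by group
      rw [heq]
      exact this
    exact (hmemP₀ c).mpr hgP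
  -- p-elements of M lie in N
  have hqMN : IsPGroup q (↥M ⧸ N.subgroupOf M) := by
    intro u
    obtain ⟨m, rfl⟩ := QuotientGroup.mk'_surjective (N.subgroupOf M) u
    have hmm : (m : G) ∈ ((N ⊔ Qg : Subgroup G) : Set G) := by rw [hM]; exact m.2
    rw [Subgroup.normal_mul] at hmm
    obtain ⟨n, hn, x, hx, hnx⟩ := hmm
    have hxM : x ∈ M := hQM hx
    have hmdec : m = (⟨n, hNM hn⟩ : M) * ⟨x, hxM⟩ := by
      ext; exact hnx.symm
    obtain ⟨l, hl⟩ := aux_pow_in_pgroup Q.2 hx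
    refine ⟨l, ?_⟩
    rw [hmdec, map_mul]
    have h1' : QuotientGroup.mk' (N.subgroupOf M) (⟨n, hNM hn⟩ : M) = 1 := by
      rw [QuotientGroup.mk'_apply, QuotientGroup.eq_one_iff]
      exact hn
    rw [h1', one_mul, ← map_pow]
    have : ((⟨x, hxM⟩ : M) ^ q ^ l) = 1 := by
      ext
      push_cast
      exact hl
    rw [this, map_one]
  have hpMN : ∀ x ∈ M, (∃ k, x ^ p ^ k = 1) → x ∈ N := by
    intro x hxM hk
    obtain ⟨k, hk⟩ := hk
    set ψ := QuotientGroup.mk' (N.subgroupOf M)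
    have hdvd1 : orderOf (ψ ⟨x, hxM⟩) ∣ p ^ k := by
      apply orderOf_dvd_of_pow_eq_one
      rw [← map_pow]
      have : ((⟨x, hxM⟩ : M) ^ p ^ k) = 1 := by ext; push_cast; exact hk
      rw [this, map_one]
    obtain ⟨l, hl⟩ := hqMN (ψ ⟨x, hxM⟩)
    have hdvd2 : orderOf (ψ ⟨x, hxM⟩) ∣ q ^ l := orderOf_dvd_of_pow_eq_one hl
    have hco : Nat.Coprime (p ^ k) (q ^ l) :=
      Nat.Coprime.pow _ _ ((Nat.coprime_primes Fact.out Fact.out).mpr hpq)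
    have : orderOf (ψ ⟨x, hxM⟩) ∣ 1 := hco ▸ Nat.dvd_gcd hdvd1 hdvd2
    have h1' : ψ ⟨x, hxM⟩ = 1 := orderOf_eq_one_iff.mp (Nat.dvd_one.mp this)
    rw [QuotientGroup.mk'_apply, QuotientGroup.eq_one_iff] at h1'
    exact h1'
  -- M ≠ ⊤
  have hMtop : M ≠ ⊤ := by
    intro h
    have := h1.2.2.1
    rw [h, inf_top_eq] at this
    exact lt_irrefl _ this
  -- Hn is not contained in M
  have hHnM : ¬ Hn ≤ M := by
    have hfr : Subgroup.normalizer (Qg : Set G) ⊔ M = ⊤ := Sylow.normalizer_sup_eq_top' Q hQM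
    intro hle
    exact hMtop (top_le_iff.mp (hfr ▸ sup_le (hNQH.trans hle) le_rfl))
  -- decomposition of elements of Hn ⊓ M
  have hdec : ∀ m ∈ Hn, m ∈ M → ∃ n x : G, n ∈ N ⊓ Hn ∧ x ∈ Qg ∧ m = n * x := by
    intro m hmH hmM
    have : m ∈ ((N ⊔ Qg : Subgroup G) : Set G) := by rw [hM]; exact hmM
    rw [Subgroup.normal_mul] at this
    obtain ⟨n, hn, x, hx, hnx⟩ := this
    refine ⟨n, x, ⟨hn, ?_⟩, hx, hnx.symm⟩
    have : n = m * x⁻¹ := by rw [← hnx]; group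
    rw [this]
    exact Hn.mul_mem hmH (Hn.inv_mem (hQH hx))
  by_cases hcase : N ⊓ Hn ≤ D
  · -- Case 1 : N_G(D) = N_G(Q)
    left
    refine le_antisymm ?_ hNQH
    intro h hh
    have hsmul : ((h • Q : Sylow q G) : Subgroup G) ≤ Qg := by
      intro x hx
      rw [Sylow.coe_subgroup_smul] at hx
      rw [Subgroup.mem_pointwise_smul_iff_inv_smul_mem] at hx
      have hy : h⁻¹ * x * h ∈ Qg := by simpa [MulAut.smul_def, MulAut.conj_inv_apply] using hx
      have hxH : x ∈ Hn := by
        have : x = h * (h⁻¹ * x * h) * h⁻¹ := by group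
        rw [this]
        exact mul_mem (mul_mem hh (hQH hy)) (inv_mem hh)
      have hxM : x ∈ M := by
        have : x = h * (h⁻¹ * x * h) * h⁻¹ := by group
        rw [this]
        exact Subgroup.Normal.conj_mem ‹M.Normal› _ (hQM hy) h
      obtain ⟨n, y, hn, hy', rfl⟩ := hdec x hxH hxM
      exact Qg.mul_mem (hDQ (hcase ⟨hn.1, hn.2⟩)) hy'
    have : ((Q : Subgroup G) : Subgroup G) = _ := rfl
    have heq : (Qg : Subgroup G) = ((h • Q : Sylow q G) : Subgroup G) :=
      (h • Q).3 Q.2 hsmul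
    have : h • Q = Q := Sylow.ext heq.symm
    exact Sylow.smul_eq_iff_mem_normalizer.mp this
  · -- Case 2 : 2-Frobenius
    right
    obtain ⟨n₁, hn₁NH, hn₁D⟩ := SetLike.not_le_iff_exists.mp hcase
    obtain ⟨g₁, hg₁H, hg₁M⟩ := SetLike.not_le_iff_exists.mp hHnM
    set D' : Subgroup ↥Hn := D.subgroupOf Hn with hD'
    haveI hD'n : D'.Normal := Subgroup.normal_in_normalizer
    set mk : ↥Hn →* (↥Hn ⧸ D') := QuotientGroup.mk' D' with hmk
    have hmksurj : Function.Surjective mk := QuotientGroup.mk'_surjective D'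
    have hmkone : ∀ z : ↥Hn, mk z = 1 ↔ (z : G) ∈ D := by
      intro z
      rw [hmk, QuotientGroup.mk'_apply, QuotientGroup.eq_one_iff]
      exact Iff.rfl
    set KX : Subgroup (↥Hn ⧸ D') := (N.subgroupOf Hn).map mk with hKX
    set LX : Subgroup (↥Hn ⧸ D') := (M.subgroupOf Hn).map mk with hLX
    haveI hKXn : KX.Normal := Subgroup.Normal.map inferInstance mk hmksurj
    haveI hLXn : LX.Normal := Subgroup.Normal.map inferInstance mk hmksurj
    have hD'N : D' ≤ N.subgroupOf Hn := fun z hz =>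
      mem_subgroupOf.mpr (hDN (mem_subgroupOf.mp hz))
    have hD'M : D' ≤ M.subgroupOf Hn := fun z hz =>
      mem_subgroupOf.mpr (hQM (hDQ (mem_subgroupOf.mp hz)))
    have hD'Q : D' ≤ Qg.subgroupOf Hn := fun z hz =>
      mem_subgroupOf.mpr (hDQ (mem_subgroupOf.mp hz))
    have hmemK : ∀ z : ↥Hn, mk z ∈ KX ↔ (z : G) ∈ N := by
      intro z
      rw [hKX, hmk, aux_mem_map_mk'_iff D' (N.subgroupOf Hn) hD'N z]
      exact Iff.rfl
    have hmemL : ∀ z : ↥Hn, mk z ∈ LX ↔ (z : G) ∈ M := by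
      intro z
      rw [hLX, hmk, aux_mem_map_mk'_iff D' (M.subgroupOf Hn) hD'M z]
      exact Iff.rfl
    have hmemQX : ∀ z : ↥Hn, mk z ∈ (Qg.subgroupOf Hn).map mk ↔ (z : G) ∈ Qg := by
      intro z
      rw [hmk, aux_mem_map_mk'_iff D' (Qg.subgroupOf Hn) hD'Q z]
      exact Iff.rfl
    set n₁' : ↥Hn := ⟨n₁, hn₁NH.2⟩ with hn₁'
    set x₁' : ↥Hn := ⟨x₁, hQH hx₁Q⟩ with hx₁'
    set g₁' : ↥Hn := ⟨g₁, hg₁H⟩ with hg₁'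
    have hmkn₁ : mk n₁' ∈ KX := (hmemK n₁').mpr hn₁NH.1
    have hmkn₁ne : mk n₁' ≠ 1 := fun h => hn₁D ((hmkone n₁').mp h)
    have hmkx₁L : mk x₁' ∈ LX := (hmemL x₁').mpr (hQM hx₁Q)
    have hmkx₁K : mk x₁' ∉ KX := fun h => hx₁N ((hmemK x₁').mp h)
    have botltKX : ⊥ < KX := by
      rw [bot_lt_iff_ne_bot]
      intro h
      exact hmkn₁ne (Subgroup.mem_bot.mp (h ▸ hmkn₁))
    have hKLle : KX ≤ LX := Subgroup.map_mono (fun z hz =>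
      mem_subgroupOf.mpr (hNM (mem_subgroupOf.mp hz)))
    have KXltLX : KX < LX := lt_of_le_of_ne hKLle (fun h => hmkx₁K (h ▸ hmkx₁L))
    have LXltTop : LX < ⊤ := by
      rw [lt_top_iff_ne_top]
      intro h
      exact hg₁M ((hmemL g₁').mp (h ▸ Subgroup.mem_top (mk g₁')))
    refine ⟨KX, LX, hKXn, hLXn, botltKX, KXltLX, LXltTop, ?_, ?_⟩
    · -- upper Frobenius kernel
      set mk2 : (↥Hn ⧸ D') →* ((↥Hn ⧸ D') ⧸ KX) := QuotientGroup.mk' KX with hmk2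
      have hmk2surj : Function.Surjective mk2 := QuotientGroup.mk'_surjective KX
      have hφone : ∀ z : ↥Hn, mk2 (mk z) = 1 ↔ (z : G) ∈ N := by
        intro z
        rw [hmk2, QuotientGroup.mk'_apply, QuotientGroup.eq_one_iff]
        exact hmemK z
      have hφL : ∀ z : ↥Hn, mk2 (mk z) ∈ LX.map mk2 ↔ (z : G) ∈ M := by
        intro z
        constructor
        · rintro ⟨l, hl, he⟩
          have h1' : mk2 (mk z * l⁻¹) = 1 := by
            rw [map_mul, map_inv, he, mul_inv_cancel]
          rw [hmk2, QuotientGroup.mk'_apply, QuotientGroup.eq_one_iff] at h1'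
          have : mk z ∈ LX := by
            have : mk z = (mk z * l⁻¹) * l := by group
            rw [this]
            exact LX.mul_mem (hKLle h1') hl
          exact (hmemL z).mp this
        · intro hz
          exact ⟨mk z, (hmemL z).mpr hz, rfl⟩
      -- choose a Sylow p-subgroup of Hn and a Sylow p-subgroup of G containing it
      obtain ⟨R₀⟩ := (inferInstance : Nonempty (Sylow p ↥Hn))
      obtain ⟨P₀, hRP₀⟩ := (R₀.2.map Hn.subtype).exists_le_sylow
      set Rg : Subgroup G := (P₀ : Subgroup G) ⊓ Hn with hRg
      have hRgP₀ : Rg ≤ (P₀ : Subgroup G) := inf_le_left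
      have hRgHn : Rg ≤ Hn := inf_le_right
      have hRgpelt : ∀ x ∈ Rg, ∃ k, x ^ p ^ k = 1 :=
        fun x hx => aux_pow_in_pgroup P₀.2 hx.1
      have hR₀Rg : Rg.subgroupOf Hn = (R₀ : Subgroup ↥Hn) := by
        have hle1 : (R₀ : Subgroup ↥Hn) ≤ Rg.subgroupOf Hn := by
          intro z hz
          refine mem_subgroupOf.mpr ⟨hRP₀ ⟨z, hz, rfl⟩, z.2⟩
        have hpg : IsPGroup p (Rg.subgroupOf Hn) := by
          intro w
          obtain ⟨k, hk⟩ := hRgpelt ((w : ↥Hn) : G) (mem_subgroupOf.mp w.2)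
          refine ⟨k, ?_⟩
          apply Subtype.ext; apply Subtype.ext
          push_cast
          exact hk
        exact R₀.3 hpg hle1
      -- p-elements of Rg ⊓ M are in N
      have hRgMN : ∀ x ∈ Rg, x ∈ M → x ∈ N := by
        intro x hx hxM
        exact hpMN x hxM (hRgpelt x hx)
      set C2 : Subgroup ((↥Hn ⧸ D') ⧸ KX) := ((Rg.subgroupOf Hn).map mk).map mk2 with hC2
      have hC2elem : ∀ z : ↥Hn, (z : G) ∈ Rg → mk2 (mk z) ∈ C2 := by
        intro z hz
        exact ⟨mk z, ⟨z, mem_subgroupOf.mpr hz, rfl⟩, rfl⟩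
      have hC2mem : ∀ z : ↥Hn, mk2 (mk z) ∈ C2 →
          ∃ r : ↥Hn, (r : G) ∈ Rg ∧ ∃ w : ↥Hn, (w : G) ∈ N ∧ z = r * w := by
        intro z hz
        obtain ⟨y1, hy1, e1⟩ := hz
        obtain ⟨r, hr, e2⟩ := hy1
        have : mk2 (mk (r⁻¹ * z)) = 1 := by
          rw [map_mul, map_mul, map_inv, map_inv, e2, e1, inv_mul_cancel]
        have hrN : ((r⁻¹ * z : ↥Hn) : G) ∈ N := (hφone _).mp this
        refine ⟨r, mem_subgroupOf.mp hr, r⁻¹ * z, hrN, by group⟩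
      -- the ⋆ lemma
      have hstar : ∀ (h : ↥Hn) (a b : ↥Hn), (a : G) ∈ Rg → (b : G) ∈ Rg → (a : G) ∉ M →
          (((h * b * h⁻¹)⁻¹ * a : ↥Hn) : G) ∈ N → mk2 (mk h) ∈ C2 := by
        intro h a b haRg hbRg haM hwN
        set y : ↥Hn := h * b * h⁻¹ with hy
        set w : ↥Hn := y⁻¹ * a with hwdef
        have hwN' : (w : G) ∈ N := hwN
        have haeq : a = y * w := by rw [hwdef]; group
        set N' : Subgroup ↥Hn := N.subgroupOf Hn with hN'
        haveI hN'norm : N'.Normal := inferInstance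
        set U : Subgroup ↥Hn := Subgroup.zpowers a ⊔ N' with hU
        have haU : a ∈ U := Subgroup.mem_sup_left (Subgroup.mem_zpowers a)
        have hwU : w ∈ U := Subgroup.mem_sup_right (mem_subgroupOf.mpr hwN')
        have hyU : y ∈ U := by
          have hy2 : y = a * w⁻¹ := by rw [haeq]; group
          rw [hy2]; exact U.mul_mem haU (U.inv_mem hwU)
        obtain ⟨ka, hka⟩ := hRgpelt _ haRg
        obtain ⟨kb, hkb⟩ := hRgpelt _ hbRg
        have hapow : a ^ p ^ ka = 1 := by apply Subtype.ext; push_cast; exact hka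
        have hypow : y ^ p ^ kb = 1 := by
          apply Subtype.ext
          rw [hy]
          push_cast
          rw [conj_pow, hkb]
          group
        set aT : ↥U := ⟨a, haU⟩ with haT
        set yT : ↥U := ⟨y, hyU⟩ with hyT
        have haTpow : aT ^ p ^ ka = 1 := by apply Subtype.ext; push_cast; exact hapow
        have hyTpow : yT ^ p ^ kb = 1 := by apply Subtype.ext; push_cast; exact hypow
        have hzap : IsPGroup p (Subgroup.zpowers aT) := by
          intro g
          obtain ⟨m, hm⟩ := Subgroup.mem_zpowers_iff.mp g.2
          refine ⟨ka, ?_⟩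
          apply Subtype.ext
          push_cast
          rw [← hm, ← zpow_natCast, ← zpow_mul, mul_comm, zpow_mul, zpow_natCast, haTpow,
            one_zpow]
        have hzyp : IsPGroup p (Subgroup.zpowers yT) := by
          intro g
          obtain ⟨m, hm⟩ := Subgroup.mem_zpowers_iff.mp g.2
          refine ⟨kb, ?_⟩
          apply Subtype.ext
          push_cast
          rw [← hm, ← zpow_natCast, ← zpow_mul, mul_comm, zpow_mul, zpow_natCast, hyTpow,
            one_zpow]
        obtain ⟨Sb, hSb⟩ := hzap.exists_le_sylow
        obtain ⟨T, hT⟩ := hzyp.exists_le_sylow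
        have haTSb : aT ∈ Sb := hSb (Subgroup.mem_zpowers aT)
        have hyTT : yT ∈ T := hT (Subgroup.mem_zpowers yT)
        obtain ⟨wT, hwT⟩ := MulAction.exists_smul_eq (↥U) Sb T
        have hw2 : (wT : ↥Hn) ∈ ((Subgroup.zpowers a : Subgroup ↥Hn) : Set ↥Hn) *
            (N' : Set ↥Hn) := by
          rw [← Subgroup.mul_normal]
          exact wT.2
        obtain ⟨aa, haa, nn, hnn, heq2⟩ := hw2
        obtain ⟨kz, hkz⟩ := Subgroup.mem_zpowers_iff.mp haa
        set nT : ↥U := ⟨nn, Subgroup.mem_sup_right hnn⟩ with hnT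
        have hwTeq : wT = aT ^ kz * nT := by
          apply Subtype.ext
          push_cast
          rw [hkz]
          exact heq2.symm
        have hs : wT⁻¹ * yT * wT ∈ Sb := by
          have hyT2 : yT ∈ ((wT • Sb : Sylow p ↥U) : Subgroup ↥U) := by
            rw [hwT]; exact hyTT
          rw [Sylow.coe_subgroup_smul, Subgroup.mem_pointwise_smul_iff_inv_smul_mem] at hyT2
          exact (by simpa [MulAut.smul_def, mul_assoc] using hyT2 : wT⁻¹ * yT * wT ∈ (Sb : Subgroup ↥U))
        set s₂ : ↥U := aT ^ kz * (wT⁻¹ * yT * wT) * (aT ^ kz)⁻¹ with hs₂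
        have hs₂Sb : s₂ ∈ Sb :=
          Sb.1.mul_mem (Sb.1.mul_mem (Subgroup.zpow_mem _ haTSb kz) hs)
            (Sb.1.inv_mem (Subgroup.zpow_mem _ haTSb kz))
        set nT2 : ↥U := aT ^ kz * nT * (aT ^ kz)⁻¹ with hnT2
        have hs₂eq : s₂ = nT2⁻¹ * yT * nT2 := by
          rw [hs₂, hnT2, hwTeq]
          group
        have hnT2N : ((nT2 : ↥Hn) : G) ∈ N := by
          have hcoe2 : (nT2 : ↥Hn) = a ^ kz * nn * (a ^ kz)⁻¹ := by
            rw [hnT2]; push_cast; rfl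
          have h3 : (nT2 : ↥Hn) ∈ N' := by
            rw [hcoe2]
            exact hN'norm.conj_mem nn hnn (a ^ kz)
          exact mem_subgroupOf.mp h3
        set n₃ : G := ((nT2 : ↥Hn) : G) with hn₃
        set s₂G : G := ((s₂ : ↥Hn) : G) with hs₂Gdef
        have hs₂G : s₂G = n₃⁻¹ * ((y : ↥Hn) : G) * n₃ := by
          rw [hs₂Gdef, hs₂eq, hn₃]
          push_cast
          rfl
        have hSgp : IsPGroup p (((Sb : Subgroup ↥U).map U.subtype).map Hn.subtype) :=
          (Sb.2.map U.subtype).map Hn.subtype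
        obtain ⟨P₁, hP₁⟩ := hSgp.exists_le_sylow
        have haP₁ : (a : G) ∈ (P₁ : Subgroup G) :=
          hP₁ ⟨(aT : ↥Hn), ⟨aT, haTSb, rfl⟩, rfl⟩
        obtain ⟨c, hc⟩ := MulAction.exists_smul_eq G P₀ P₁
        have hmemP₁ : ∀ v : G, v ∈ (P₁ : Subgroup G) ↔ c⁻¹ * v * c ∈ (P₀ : Subgroup G) := by
          intro v
          rw [← hc, Sylow.coe_subgroup_smul, Subgroup.mem_pointwise_smul_iff_inv_smul_mem]
          simp [MulAut.smul_def, mul_assoc]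
        have hcP₀ : c ∈ (P₀ : Subgroup G) :=
          hL1 P₀ c (a : G) haRg.1 ((hmemP₁ _).mp haP₁) haM
        have hP₁eqP₀ : (P₁ : Subgroup G) = (P₀ : Subgroup G) := by
          have hfix : c • P₀ = P₀ :=
            Sylow.smul_eq_iff_mem_normalizer.mpr (Subgroup.le_normalizer hcP₀)
          rw [← hc, hfix]
        have hs₂P₀ : s₂G ∈ (P₀ : Subgroup G) := by
          rw [← hP₁eqP₀]
          exact hP₁ ⟨(s₂ : ↥Hn), ⟨s₂, hs₂Sb, rfl⟩, rfl⟩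
        have hyM : ((y : ↥Hn) : G) ∉ M := by
          intro hyM'
          apply haM
          have hac : (a : G) = ((y : ↥Hn) : G) * ((w : ↥Hn) : G) := by
            rw [haeq]; push_cast; rfl
          rw [hac]
          exact M.mul_mem hyM' (hNM hwN')
        have hs₂M : s₂G ∉ M := by
          intro hm
          apply hyM
          have hyeq : ((y : ↥Hn) : G) = n₃ * s₂G * n₃⁻¹ := by rw [hs₂G]; group
          rw [hyeq]
          exact M.mul_mem (M.mul_mem (hNM hnT2N) hm) (M.inv_mem (hNM hnT2N))
        set c₁ : G := n₃⁻¹ * (h : G) with hc₁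
        have hconj : c₁⁻¹ * s₂G * c₁ ∈ (P₀ : Subgroup G) := by
          have hcb : c₁⁻¹ * s₂G * c₁ = (b : G) := by
            have hyG : ((y : ↥Hn) : G) = (h : G) * (b : G) * (h : G)⁻¹ := by
              rw [hy]; push_cast; rfl
            rw [hc₁, hs₂G, hyG]
            group
          rw [hcb]
          exact hbRg.1
        have hc₁P₀ : c₁ ∈ (P₀ : Subgroup G) := hL1 P₀ c₁ s₂G hs₂P₀ hconj hs₂M
        have hc₁Hn : c₁ ∈ Hn := Hn.mul_mem (Hn.inv_mem (nT2 : ↥Hn).2) h.2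
        have hdecomp : h = (nT2 : ↥Hn) * ⟨c₁, hc₁Hn⟩ := by
          apply Subtype.ext
          push_cast
          rw [hc₁, hn₃]
          group
        rw [hdecomp, map_mul, map_mul]
        have hone1 : mk2 (mk (nT2 : ↥Hn)) = 1 := (hφone _).mpr hnT2N
        rw [hone1, one_mul]
        exact hC2elem _ ⟨hc₁P₀, hc₁Hn⟩
      -- index argument : M.subgroupOf Hn ⊔ Rg.subgroupOf Hn = ⊤
      have hT1 : M.subgroupOf Hn ⊔ Rg.subgroupOf Hn = ⊤ := by
        have hGMp : IsPGroup p (G ⧸ M) := by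
          intro u
          obtain ⟨g, rfl⟩ := QuotientGroup.mk_surjective u
          have hg : g ∈ ((M ⊔ (P : Subgroup G) : Subgroup G) : Set G) := by
            rw [hG]; trivial
          rw [Subgroup.normal_mul] at hg
          obtain ⟨m, hm, y, hy, hmy⟩ := hg
          obtain ⟨k, hk⟩ := aux_pow_in_pgroup P.2 hy
          refine ⟨k, ?_⟩
          have hgy : (QuotientGroup.mk g : G ⧸ M) = QuotientGroup.mk y := by
            rw [QuotientGroup.eq]
            rw [← hmy]
            have : (m * y)⁻¹ * y = y⁻¹ * m⁻¹ * y := by group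
            rw [this]
            simpa [mul_assoc] using Subgroup.Normal.conj_mem ‹M.Normal› _ (M.inv_mem hm) y⁻¹
          rw [hgy, ← QuotientGroup.mk_pow, hk]
          rfl
        have hHnMp : IsPGroup p (↥Hn ⧸ M.subgroupOf Hn) := by
          intro u
          obtain ⟨z, rfl⟩ := QuotientGroup.mk_surjective u
          obtain ⟨k, hk⟩ := hGMp (QuotientGroup.mk (z : G))
          have hzM : (z : G) ^ p ^ k ∈ M := by
            rw [← QuotientGroup.eq_one_iff, QuotientGroup.mk_pow]
            exact hk
          refine ⟨k, ?_⟩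
          rw [← QuotientGroup.mk_pow, QuotientGroup.eq_one_iff]
          refine mem_subgroupOf.mpr ?_
          push_cast
          exact hzM
        obtain ⟨n, hn⟩ := IsPGroup.iff_card.mp hHnMp
        have hd1 : (M.subgroupOf Hn ⊔ Rg.subgroupOf Hn).index ∣ p ^ n := by
          have hle := Subgroup.index_dvd_of_le (le_sup_left :
            M.subgroupOf Hn ≤ M.subgroupOf Hn ⊔ Rg.subgroupOf Hn)
          have heq : (M.subgroupOf Hn).index = p ^ n := by
            rw [Subgroup.index_eq_card, hn]
          rwa [heq] at hle
        have hd2 : ¬ p ∣ (M.subgroupOf Hn ⊔ Rg.subgroupOf Hn).index := by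
          intro hdvd
          have hle := Subgroup.index_dvd_of_le (le_sup_right :
            Rg.subgroupOf Hn ≤ M.subgroupOf Hn ⊔ Rg.subgroupOf Hn)
          have hnd : ¬ p ∣ (Rg.subgroupOf Hn).index := by
            rw [hR₀Rg]; exact R₀.not_dvd_index
          exact hnd (hdvd.trans hle)
        have hone : (M.subgroupOf Hn ⊔ Rg.subgroupOf Hn).index = 1 := by
          have hco : Nat.Coprime ((M.subgroupOf Hn ⊔ Rg.subgroupOf Hn).index) (p ^ n) :=
            Nat.Coprime.pow_right n ((Nat.Prime.coprime_iff_not_dvd Fact.out).mpr hd2).symm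
          exact Nat.Coprime.eq_one_of_dvd hco hd1
        exact Subgroup.index_eq_one.mp hone
      -- assemble
      refine ⟨Subgroup.Normal.map hLXn mk2 hmk2surj, ?_, ?_, C2, ?_, ?_, ?_⟩
      · -- ⊥ < LX.map mk2
        rw [bot_lt_iff_ne_bot]
        intro hbot
        have : mk2 (mk x₁') ∈ LX.map mk2 := ⟨mk x₁', hmkx₁L, rfl⟩
        rw [hbot, Subgroup.mem_bot] at this
        exact hx₁N ((hφone x₁').mp this)
      · -- LX.map mk2 < ⊤
        rw [lt_top_iff_ne_top]
        intro htop
        have : mk2 (mk g₁') ∈ LX.map mk2 := htop ▸ Subgroup.mem_top _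
        exact hg₁M ((hφL g₁').mp this)
      · -- Frobenius condition
        intro x hx
        obtain ⟨y, rfl⟩ := hmk2surj x
        obtain ⟨h, rfl⟩ := hmksurj y
        rw [Subgroup.eq_bot_iff_forall]
        intro v hv
        rw [Subgroup.mem_inf] at hv
        obtain ⟨hv1, w0, hw0, hvw⟩ := hv
        obtain ⟨y1, hy1, e1⟩ := hv1
        obtain ⟨a', ha', e2⟩ := hy1
        obtain ⟨y2, hy2, e3⟩ := hw0
        obtain ⟨b', hb', e4⟩ := hy2
        have ha'Rg : (a' : G) ∈ Rg := mem_subgroupOf.mp ha'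
        have hb'Rg : (b' : G) ∈ Rg := mem_subgroupOf.mp hb'
        have hvconj : mk2 (mk (h * b' * h⁻¹)) = v := by
          rw [← hvw, ← e3, ← e4]
          simp only [map_mul, map_inv]
          rfl
        have hva : mk2 (mk a') = v := by rw [← e1, ← e2]
        by_cases haM : (a' : G) ∈ M
        · have : (a' : G) ∈ N := hRgMN _ ha'Rg haM
          rw [← hva]
          exact (hφone a').mpr this
        · exfalso
          apply hx
          apply hstar h a' b' ha'Rg hb'Rg haM
          have : mk2 (mk ((h * b' * h⁻¹)⁻¹ * a')) = 1 := by
            rw [map_mul, map_mul, map_inv, map_inv, hvconj, hva, inv_mul_cancel]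
          exact (hφone _).mp this
      · -- sup = ⊤
        have : LX.map mk2 ⊔ C2 = ((M.subgroupOf Hn ⊔ Rg.subgroupOf Hn).map mk).map mk2 := by
          rw [Subgroup.map_sup, Subgroup.map_sup]
        rw [this, hT1]
        rw [Subgroup.map_top_of_surjective mk hmksurj,
          Subgroup.map_top_of_surjective mk2 hmk2surj]
      · -- inf = ⊥
        rw [Subgroup.eq_bot_iff_forall]
        intro v hv
        rw [Subgroup.mem_inf] at hv
        obtain ⟨hvL, hvC⟩ := hv
        obtain ⟨y1, hy1, e1⟩ := hvC
        obtain ⟨r', hr', e2⟩ := hy1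
        have hrM : (r' : G) ∈ M := by
          apply (hφL r').mp
          rw [e2, e1]
          exact hvL
        have : (r' : G) ∈ N := hRgMN _ (mem_subgroupOf.mp hr') hrM
        rw [← e1, ← e2]
        exact (hφone r').mpr this
    · -- lower Frobenius kernel
      have hQXle : (Qg.subgroupOf Hn).map mk ≤ LX :=
        hLX ▸ Subgroup.map_mono (fun z hz => mem_subgroupOf.mpr (hQM (mem_subgroupOf.mp hz)))
      set C' : Subgroup ↥LX := ((Qg.subgroupOf Hn).map mk).subgroupOf LX with hC'
      refine ⟨inferInstance, ?_, ?_, C', ?_, ?_, ?_⟩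
      · -- ⊥ < KX.subgroupOf LX
        rw [bot_lt_iff_ne_bot]
        intro h
        have : (⟨mk n₁', hKLle hmkn₁⟩ : ↥LX) ∈ KX.subgroupOf LX := mem_subgroupOf.mpr hmkn₁
        rw [h, Subgroup.mem_bot] at this
        exact hmkn₁ne (congrArg Subtype.val this)
      · -- KX.subgroupOf LX < ⊤
        rw [lt_top_iff_ne_top]
        intro h
        have : (⟨mk x₁', hmkx₁L⟩ : ↥LX) ∈ KX.subgroupOf LX := by
          rw [h]; exact Subgroup.mem_top _
        exact hmkx₁K (mem_subgroupOf.mp this)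
      · -- Frobenius condition for C'
        intro u hu
        rw [Subgroup.eq_bot_iff_forall]
        intro v hv
        rw [Subgroup.mem_inf] at hv
        obtain ⟨hv1, w, hw, hvw⟩ := hv
        obtain ⟨x₂', hx₂', hx₂eq⟩ := mem_subgroupOf.mp hv1
        obtain ⟨x₃', hx₃', hx₃eq⟩ := mem_subgroupOf.mp hw
        obtain ⟨m', hm', hm'eq⟩ := u.2
        have hm'M : (m' : G) ∈ M := mem_subgroupOf.mp hm'
        have hm'Q : (m' : G) ∉ Qg := by
          intro hq
          exact hu (mem_subgroupOf.mpr (by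
            rw [← hm'eq]
            exact (hmemQX m').mpr hq))
        -- coe computation
        have hvw' : u * w * u⁻¹ = v := by
          rw [← hvw]; rfl
        have hcoe : mk (m' * x₃' * m'⁻¹) = mk x₂' := by
          have hstep : mk (m' * x₃' * m'⁻¹) = ((u * w * u⁻¹ : ↥LX) : ↥Hn ⧸ D') := by
            rw [map_mul, map_mul, map_inv, hm'eq, hx₃eq]
            push_cast
            rfl
          rw [hstep, hvw', hx₂eq]
        obtain ⟨z, hz, hzeq⟩ := (QuotientGroup.mk'_eq_mk' D').mp hcoe
        have hx₂G : (x₂' : G) = (m' : G) * (x₃' : G) * (m' : G)⁻¹ * (z : G) := by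
          conv_lhs => rw [← hzeq]
          push_cast
          rfl
        have hzD : (z : G) ∈ D := mem_subgroupOf.mp hz
        have hd' : (m' : G)⁻¹ * (z : G) * (m' : G) ∈ D := by
          have hnorm := mem_normalizer_iff.mp m'.2
          refine (hnorm ((m' : G)⁻¹ * (z : G) * (m' : G))).mpr ?_
          have : (m' : G) * ((m' : G)⁻¹ * (z : G) * (m' : G)) * (m' : G)⁻¹ = (z : G) := by group
          rw [this]
          exact hzD
        have hconj : (m' : G)⁻¹ * (x₂' : G) * (m' : G) ∈ Qg := by
          have : (m' : G)⁻¹ * (x₂' : G) * (m' : G) =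
              (x₃' : G) * ((m' : G)⁻¹ * (z : G) * (m' : G)) := by
            rw [hx₂G]; group
          rw [this]
          exact Qg.mul_mem (mem_subgroupOf.mp hx₃') (hDQ hd')
        have hx₂D : (x₂' : G) ∈ D := hFW2 (m' : G) hm'M hm'Q (x₂' : G)
          (mem_subgroupOf.mp hx₂') hconj
        have : (v : ↥Hn ⧸ D') = 1 := by
          rw [← hx₂eq]
          exact (hmkone x₂').mpr hx₂D
        exact Subtype.ext this
      · -- sup = ⊤
        rw [eq_top_iff']
        intro u
        obtain ⟨m', hm', hm'eq⟩ := u.2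
        obtain ⟨n₂, x₂, hn₂, hx₂, hdecomp⟩ := hdec (m' : G) m'.2 (mem_subgroupOf.mp hm')
        set n₂' : ↥Hn := ⟨n₂, hn₂.2⟩
        set x₂' : ↥Hn := ⟨x₂, hQH hx₂⟩
        have hmkn₂K : mk n₂' ∈ KX := (hmemK n₂').mpr hn₂.1
        have hmkx₂Q : mk x₂' ∈ (Qg.subgroupOf Hn).map mk := (hmemQX x₂').mpr hx₂
        have hueq : u = (⟨mk n₂', hKLle hmkn₂K⟩ : ↥LX) * ⟨mk x₂', hQXle hmkx₂Q⟩ := by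
          apply Subtype.ext
          have : m' = n₂' * x₂' := Subtype.ext hdecomp
          rw [← hm'eq, this]
          push_cast
          rw [map_mul]
        rw [hueq]
        exact Subgroup.mul_mem _
          (Subgroup.mem_sup_left (mem_subgroupOf.mpr hmkn₂K))
          (Subgroup.mem_sup_right (mem_subgroupOf.mpr hmkx₂Q))
      · -- inf = ⊥
        rw [Subgroup.eq_bot_iff_forall]
        intro v hv
        rw [Subgroup.mem_inf] at hv
        obtain ⟨hv1, hv2⟩ := hv
        obtain ⟨n₃', hn₃', hn₃eq⟩ := mem_subgroupOf.mp hv1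
        obtain ⟨x₃', hx₃', hx₃eq⟩ := mem_subgroupOf.mp hv2
        have hcoe : mk x₃' = mk n₃' := by rw [hx₃eq, hn₃eq]
        obtain ⟨z, hz, hzeq⟩ := (QuotientGroup.mk'_eq_mk' D').mp hcoe
        have hx₃N : (x₃' : G) ∈ N := by
          have : (x₃' : G) = (n₃' : G) * (z : G)⁻¹ := by
            rw [← hzeq]; push_cast; group
          rw [this]
          exact N.mul_mem (mem_subgroupOf.mp hn₃') (N.inv_mem (hDN (mem_subgroupOf.mp hz)))
        have hx₃D : (x₃' : G) ∈ D := ⟨mem_subgroupOf.mp hx₃', hx₃N⟩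
        have : (v : ↥Hn ⧸ D') = 1 := by
          rw [← hx₃eq]
          exact (hmkone x₃').mpr hx₃D
        exact Subtype.ext this
end
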